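/- arXiv:math-ph/0612080 — 8 statements merged into one kernel-verified Lean document; each statement's English description precedes it below -/
import Mathlib

section
/- Let n ≥ 2, κ > 0, c ∈ ℝ and b₁,…,bₙ ∈ ℝ. Define the Hamiltonian H(q,p) = (|p|² − c + Σⱼ bⱼ qⱼ⁻²) / (2(κ + |q|²)) and, for each integer m with 1 < m ≤ n, the left partial Casimir C^(m)(q,p) = Σ_{1≤i<j≤m} [ (qᵢpⱼ − qⱼpᵢ)² + bᵢqⱼ²/qᵢ² + bⱼqᵢ²/qⱼ² ] + Σ_{i=1}^m bᵢ. Then {H, C^(m)} = 0 on the open set where all qᵢ are nonzero, for every m with 1 < m ≤ n. -/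
/-- Canonical Poisson bracket on ℝⁿ × ℝⁿ with coordinates (q, p). -/
noncomputable def poissonBracket (n : ℕ) (f g : (Fin n → ℝ) × (Fin n → ℝ) → ℝ)
    (z : (Fin n → ℝ) × (Fin n → ℝ)) : ℝ :=
  ∑ i : Fin n,
    (fderiv ℝ f z (Pi.single i 1, 0) * fderiv ℝ g z (0, Pi.single i 1)
      - fderiv ℝ f z (0, Pi.single i 1) * fderiv ℝ g z (Pi.single i 1, 0))

/-- Left partial Casimir C^(m) (indices 1,…,m in 1-based notation, i.e. the
coordinates of `Fin n` whose value is < m):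
`C^(m) = Σ_{1≤i<j≤m} [(qᵢpⱼ − qⱼpᵢ)² + bᵢqⱼ²/qᵢ² + bⱼqᵢ²/qⱼ²] + Σ_{i=1}^m bᵢ`. -/
noncomputable def leftCasimir (n : ℕ) (b : Fin n → ℝ) (m : ℕ)
    (z : (Fin n → ℝ) × (Fin n → ℝ)) : ℝ :=
  (∑ i : Fin n, ∑ j ∈ Finset.Ioi i,
    if (j : ℕ) < m then
      (z.1 i * z.2 j - z.1 j * z.2 i) ^ 2
        + b i * z.1 j ^ 2 / z.1 i ^ 2 + b j * z.1 i ^ 2 / z.1 j ^ 2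
    else 0)
  + ∑ i : Fin n, if (i : ℕ) < m then b i else 0

section helpers
variable {E : Type*} [NormedAddCommGroup E] [NormedSpace ℝ E] {f g : E → ℝ} {L M : E →L[ℝ] ℝ} {z : E}

lemma hfd_sq (h : HasFDerivAt f L z) : HasFDerivAt (fun y => f y ^ 2) ((2 * f z) • L) z := by
  have h2 := h.fun_mul h
  simp only [← pow_two] at h2
  refine h2.congr_fderiv (Eq.symm ?_)
  rw [two_mul, add_smul]

lemma hfd_inv (h : HasFDerivAt f L z) (h0 : f z ≠ 0) :
    HasFDerivAt (fun y => (f y)⁻¹) ((-(f z ^ 2)⁻¹) • L) z := by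
  have h2 := (hasFDerivAt_inv' (𝕜 := ℝ) h0).comp z h
  refine h2.congr_fderiv (Eq.symm ?_)
  ext v
  simp only [ContinuousLinearMap.smul_apply, ContinuousLinearMap.coe_comp', Function.comp_apply,
    ContinuousLinearMap.neg_apply, ContinuousLinearMap.mulLeftRight_apply, smul_eq_mul]
  rw [pow_two, mul_inv]
  ring

lemma hfd_div (h : HasFDerivAt f L z) (hg : HasFDerivAt g M z) (h0 : g z ≠ 0) :
    HasFDerivAt (fun y => f y / g y) ((g z)⁻¹ • L + (-(f z) * (g z ^ 2)⁻¹) • M) z := by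
  simp only [div_eq_mul_inv]
  have h2 := h.fun_mul (hfd_inv hg h0)
  refine h2.congr_fderiv (Eq.symm ?_)
  ext v
  simp only [ContinuousLinearMap.add_apply, ContinuousLinearMap.smul_apply, smul_eq_mul]
  ring

end helpers

open ContinuousLinearMap in
noncomputable def Lq (n : ℕ) (i : Fin n) : ((Fin n → ℝ) × (Fin n → ℝ)) →L[ℝ] ℝ :=
  (proj i).comp (fst ℝ (Fin n → ℝ) (Fin n → ℝ))

open ContinuousLinearMap in
noncomputable def Lp (n : ℕ) (i : Fin n) : ((Fin n → ℝ) × (Fin n → ℝ)) →L[ℝ] ℝ :=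
  (proj i).comp (snd ℝ (Fin n → ℝ) (Fin n → ℝ))

@[simp] lemma Lq_apply (n : ℕ) (i : Fin n) (v : (Fin n → ℝ) × (Fin n → ℝ)) : Lq n i v = v.1 i := rfl
@[simp] lemma Lp_apply (n : ℕ) (i : Fin n) (v : (Fin n → ℝ) × (Fin n → ℝ)) : Lp n i v = v.2 i := rfl

lemma hfd_q (n : ℕ) (i : Fin n) (z : (Fin n → ℝ) × (Fin n → ℝ)) :
    HasFDerivAt (fun z : (Fin n → ℝ) × (Fin n → ℝ) => z.1 i) (Lq n i) z :=
  (Lq n i).hasFDerivAt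

lemma hfd_p (n : ℕ) (i : Fin n) (z : (Fin n → ℝ) × (Fin n → ℝ)) :
    HasFDerivAt (fun z : (Fin n → ℝ) × (Fin n → ℝ) => z.2 i) (Lp n i) z :=
  (Lp n i).hasFDerivAt

/-- Derivative of the Hamiltonian, with evaluations at basis directions. -/
lemma ham_deriv (n : ℕ) (κ c : ℝ) (hκ : 0 < κ) (b : Fin n → ℝ)
    (z : (Fin n → ℝ) × (Fin n → ℝ)) (hz : ∀ i, z.1 i ≠ 0) :
    ∃ K : ((Fin n → ℝ) × (Fin n → ℝ)) →L[ℝ] ℝ,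
      HasFDerivAt (fun z : (Fin n → ℝ) × (Fin n → ℝ) =>
        ((∑ i, z.2 i ^ 2) - c + ∑ j, b j * (z.1 j ^ 2)⁻¹) / (2 * (κ + ∑ i, z.1 i ^ 2))) K z ∧
      (∀ k, K (Pi.single k 1, 0) =
        -(b k) * (z.1 k ^ 3)⁻¹ / (κ + ∑ i, z.1 i ^ 2)
          - z.1 k * ((∑ i, z.2 i ^ 2) - c + ∑ j, b j * (z.1 j ^ 2)⁻¹)
              / (κ + ∑ i, z.1 i ^ 2) ^ 2) ∧
      (∀ k, K (0, Pi.single k 1) = z.2 k / (κ + ∑ i, z.1 i ^ 2)) := by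
  have hD : (0:ℝ) < κ + ∑ i, z.1 i ^ 2 :=
    lt_add_of_lt_of_nonneg hκ (Finset.sum_nonneg fun i _ => sq_nonneg _)
  have hD' : (κ + ∑ i, z.1 i ^ 2) ≠ 0 := hD.ne'
  have hB : (2 * (κ + ∑ i, z.1 i ^ 2)) ≠ 0 := by positivity
  have hA := ((HasFDerivAt.fun_sum (fun (i : Fin n) (_ : i ∈ Finset.univ) =>
      hfd_sq (hfd_p n i z))).sub_const c).fun_add
      (HasFDerivAt.fun_sum (fun (j : Fin n) (_ : j ∈ Finset.univ) =>
        ((hfd_inv (hfd_sq (hfd_q n j z)) (pow_ne_zero 2 (hz j))).const_mul (b j))))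
  have hBd := ((HasFDerivAt.fun_sum (fun (i : Fin n) (_ : i ∈ Finset.univ) =>
      hfd_sq (hfd_q n i z))).const_add κ).const_mul (2:ℝ)
  refine ⟨_, hfd_div hA hBd hB, fun k => ?_, fun k => ?_⟩ <;>
  · simp only [ContinuousLinearMap.add_apply, ContinuousLinearMap.smul_apply,
      ContinuousLinearMap.coe_sum', Finset.sum_apply, smul_eq_mul, Lq_apply, Lp_apply,
      Pi.single_apply, Pi.zero_apply]
    simp only [mul_ite, mul_one, mul_zero, Finset.sum_ite_eq', Finset.mem_univ, if_true,
      Finset.sum_const_zero, add_zero, zero_add]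
    have hq := hz k
    field_simp
    all_goals ring

/-- Derivative of a single Casimir pair term, with evaluation formula. -/
lemma casimir_term_deriv (n m : ℕ) (b : Fin n → ℝ) (i j : Fin n)
    (z : (Fin n → ℝ) × (Fin n → ℝ)) (hzi : z.1 i ≠ 0) (hzj : z.1 j ≠ 0) :
    ∃ K : ((Fin n → ℝ) × (Fin n → ℝ)) →L[ℝ] ℝ,
      HasFDerivAt (fun z : (Fin n → ℝ) × (Fin n → ℝ) =>
        if (j : ℕ) < m then
          (z.1 i * z.2 j - z.1 j * z.2 i) ^ 2
            + b i * z.1 j ^ 2 / z.1 i ^ 2 + b j * z.1 i ^ 2 / z.1 j ^ 2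
        else 0) K z ∧
      ∀ v : (Fin n → ℝ) × (Fin n → ℝ), K v =
        if (j : ℕ) < m then
          2 * (z.1 i * z.2 j - z.1 j * z.2 i) *
            (z.1 i * v.2 j + z.2 j * v.1 i - z.1 j * v.2 i - z.2 i * v.1 j)
          + (2 * b i * z.1 j / z.1 i ^ 2 - 2 * b j * z.1 i ^ 2 / z.1 j ^ 3) * v.1 j
          + (2 * b j * z.1 i / z.1 j ^ 2 - 2 * b i * z.1 j ^ 2 / z.1 i ^ 3) * v.1 i
        else 0 := by
  by_cases hc : (j : ℕ) < m
  · simp only [if_pos hc]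
    have h1 := hfd_sq (((hfd_q n i z).fun_mul (hfd_p n j z)).fun_sub ((hfd_q n j z).fun_mul (hfd_p n i z)))
    have h2 := hfd_div ((hfd_sq (hfd_q n j z)).const_mul (b i)) (hfd_sq (hfd_q n i z))
      (pow_ne_zero 2 hzi)
    have h3 := hfd_div ((hfd_sq (hfd_q n i z)).const_mul (b j)) (hfd_sq (hfd_q n j z))
      (pow_ne_zero 2 hzj)
    refine ⟨_, (h1.fun_add h2).fun_add h3, fun v => ?_⟩
    simp only [ContinuousLinearMap.add_apply, ContinuousLinearMap.smul_apply,
      ContinuousLinearMap.coe_sub', Pi.sub_apply, smul_eq_mul, Lq_apply, Lp_apply]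
    field_simp
    ring
  · simp only [if_neg hc]
    exact ⟨0, hasFDerivAt_const 0 z, fun v => by simp⟩


/-- The Hamiltonian H = (|p|² − c + Σⱼ bⱼqⱼ⁻²)/(2(κ + |q|²)) Poisson-commutes
with every left partial Casimir C^(m), 1 < m ≤ n, on Ω. -/
theorem hamiltonian_commutes_left_casimirs (n : ℕ) (hn : 2 ≤ n)
    (κ c : ℝ) (hκ : 0 < κ) (b : Fin n → ℝ)
    (H : (Fin n → ℝ) × (Fin n → ℝ) → ℝ)
    (hH : H = fun z =>
      ((∑ i, z.2 i ^ 2) - c + ∑ j, b j * (z.1 j ^ 2)⁻¹) / (2 * (κ + ∑ i, z.1 i ^ 2))) :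
    ∀ m : ℕ, 1 < m → m ≤ n →
      ∀ z : (Fin n → ℝ) × (Fin n → ℝ), (∀ i, z.1 i ≠ 0) →
        poissonBracket n H (leftCasimir n b m) z = 0 := by
  intro m hm hmn z hz
  subst hH
  have hD : (0:ℝ) < κ + ∑ i, z.1 i ^ 2 :=
    lt_add_of_lt_of_nonneg hκ (Finset.sum_nonneg fun i _ => sq_nonneg _)
  have hD' : (κ + ∑ i, z.1 i ^ 2) ≠ 0 := hD.ne'
  obtain ⟨KH, hKH, hKHq, hKHp⟩ := ham_deriv n κ c hκ b z hz
  have hCK := fun (i j : Fin n) => casimir_term_deriv n m b i j z (hz i) (hz j)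
  set KC : Fin n → Fin n → ((Fin n → ℝ) × (Fin n → ℝ)) →L[ℝ] ℝ :=
    fun i j => (hCK i j).choose with hKCdef
  have hC : HasFDerivAt (leftCasimir n b m)
      (∑ i : Fin n, ∑ j ∈ Finset.Ioi i, KC i j) z := by
    have : leftCasimir n b m = fun z : (Fin n → ℝ) × (Fin n → ℝ) =>
      (∑ i : Fin n, ∑ j ∈ Finset.Ioi i,
        if (j : ℕ) < m then
          (z.1 i * z.2 j - z.1 j * z.2 i) ^ 2
            + b i * z.1 j ^ 2 / z.1 i ^ 2 + b j * z.1 i ^ 2 / z.1 j ^ 2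
        else 0)
      + ∑ i : Fin n, if (i : ℕ) < m then b i else 0 := rfl
    rw [this]
    exact (HasFDerivAt.fun_sum (fun i _ => HasFDerivAt.fun_sum
      (fun j _ => (hCK i j).choose_spec.1))).add_const _
  rw [poissonBracket, hKH.fderiv, hC.fderiv]
  have hCval : ∀ v, (∑ i : Fin n, ∑ j ∈ Finset.Ioi i, KC i j) v
      = ∑ i : Fin n, ∑ j ∈ Finset.Ioi i, KC i j v := by
    intro v
    simp [ContinuousLinearMap.coe_sum', Finset.sum_apply]
  -- rearrange into a sum over pairs
  have key : ∀ i : Fin n, ∀ j ∈ Finset.Ioi i,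
      (∑ k : Fin n, (KH (Pi.single k 1, 0) * KC i j (0, Pi.single k 1)
        - KH (0, Pi.single k 1) * KC i j (Pi.single k 1, 0))) = 0 := by
    intro i j hj
    have hij : i ≠ j := (Finset.mem_Ioi.mp hj).ne'.symm
    by_cases hc : (j : ℕ) < m
    · set L := z.1 i * z.2 j - z.1 j * z.2 i with hL
      set D := κ + ∑ i, z.1 i ^ 2 with hDdef
      set N := (∑ i, z.2 i ^ 2) - c + ∑ j, b j * (z.1 j ^ 2)⁻¹ with hN
      have step : ∀ k : Fin n,
          KH (Pi.single k 1, 0) * KC i j (0, Pi.single k 1)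
            - KH (0, Pi.single k 1) * KC i j (Pi.single k 1, 0)
          = (if j = k then
              (-(b k) * (z.1 k ^ 3)⁻¹ / D - z.1 k * N / D ^ 2) * (2 * L * z.1 i)
              - (z.2 k / D) * (-(2 * L * z.2 i)
                  + (2 * b i * z.1 j / z.1 i ^ 2 - 2 * b j * z.1 i ^ 2 / z.1 j ^ 3))
            else 0)
          + (if i = k then
              (-(b k) * (z.1 k ^ 3)⁻¹ / D - z.1 k * N / D ^ 2) * (-(2 * L * z.1 j))
              - (z.2 k / D) * ((2 * L * z.2 j)
                  + (2 * b j * z.1 i / z.1 j ^ 2 - 2 * b i * z.1 j ^ 2 / z.1 i ^ 3))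
            else 0) := by
        intro k
        rw [hKHq k, hKHp k, (hCK i j).choose_spec.2, (hCK i j).choose_spec.2]
        simp only [if_pos hc, Pi.single_apply, Pi.zero_apply]
        split_ifs with h1 h2 h2
        · exact absurd (h2.trans h1.symm) hij
        · ring
        · ring
        · ring
      rw [Finset.sum_congr rfl (fun k _ => step k), Finset.sum_add_distrib,
        Finset.sum_ite_eq, Finset.sum_ite_eq]
      simp only [Finset.mem_univ, if_true]
      have hqi := hz i
      have hqj := hz j
      field_simp
      ring
    · have step : ∀ k : Fin n,
          KH (Pi.single k 1, 0) * KC i j (0, Pi.single k 1)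
            - KH (0, Pi.single k 1) * KC i j (Pi.single k 1, 0) = 0 := by
        intro k
        rw [(hCK i j).choose_spec.2, (hCK i j).choose_spec.2]
        simp [if_neg hc]
      simp [step]
  calc (∑ k : Fin n, (KH (Pi.single k 1, 0) * (∑ i : Fin n, ∑ j ∈ Finset.Ioi i, KC i j) (0, Pi.single k 1)
        - KH (0, Pi.single k 1) * (∑ i : Fin n, ∑ j ∈ Finset.Ioi i, KC i j) (Pi.single k 1, 0)))
      = ∑ k : Fin n, ∑ i : Fin n, ∑ j ∈ Finset.Ioi i,
          (KH (Pi.single k 1, 0) * KC i j (0, Pi.single k 1)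
            - KH (0, Pi.single k 1) * KC i j (Pi.single k 1, 0)) := by
        refine Finset.sum_congr rfl (fun k _ => ?_)
        rw [hCval, hCval, Finset.mul_sum, Finset.mul_sum, ← Finset.sum_sub_distrib]
        refine Finset.sum_congr rfl (fun i _ => ?_)
        rw [Finset.mul_sum, Finset.mul_sum, ← Finset.sum_sub_distrib]
    _ = ∑ i : Fin n, ∑ k : Fin n, ∑ j ∈ Finset.Ioi i,
          (KH (Pi.single k 1, 0) * KC i j (0, Pi.single k 1)
            - KH (0, Pi.single k 1) * KC i j (Pi.single k 1, 0)) := Finset.sum_comm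
    _ = ∑ i : Fin n, ∑ j ∈ Finset.Ioi i, ∑ k : Fin n,
          (KH (Pi.single k 1, 0) * KC i j (0, Pi.single k 1)
            - KH (0, Pi.single k 1) * KC i j (Pi.single k 1, 0)) :=
        Finset.sum_congr rfl (fun i _ => Finset.sum_comm)
    _ = 0 := by
        refine Finset.sum_eq_zero (fun i _ => Finset.sum_eq_zero (fun j hj => key i j hj))
end

section
/- Let n ≥ 2, κ > 0, c ∈ ℝ and b₁,…,bₙ ∈ ℝ. Define the Hamiltonian H(q,p) = (|p|² − c + Σⱼ bⱼ qⱼ⁻²) / (2(κ + |q|²)) and, for each integer m with 1 < m ≤ n, the right partial Casimir C_(m)(q,p) = Σ_{n−m<i<j≤n} [ (qᵢpⱼ − qⱼpᵢ)² + bᵢqⱼ²/qᵢ² + bⱼqᵢ²/qⱼ² ] + Σ_{i=n−m+1}^n bᵢ. Then {H, C_(m)} = 0 on the open set where all qᵢ are nonzero, for every m with 1 < m ≤ n. -/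
set_option maxHeartbeats 2000000


/-- Right partial Casimir C_(m) (1-based indices n−m+1,…,n, i.e. the coordinates
of `Fin n` whose value is ≥ n − m):
`C_(m) = Σ_{n−m<i<j≤n} [(qᵢpⱼ − qⱼpᵢ)² + bᵢqⱼ²/qᵢ² + bⱼqᵢ²/qⱼ²] + Σ_{i=n−m+1}^n bᵢ`. -/
noncomputable def rightCasimir (n : ℕ) (b : Fin n → ℝ) (m : ℕ)
    (z : (Fin n → ℝ) × (Fin n → ℝ)) : ℝ :=
  (∑ i : Fin n, ∑ j ∈ Finset.Ioi i,
    if n - m ≤ (i : ℕ) then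
      (z.1 i * z.2 j - z.1 j * z.2 i) ^ 2
        + b i * z.1 j ^ 2 / z.1 i ^ 2 + b j * z.1 i ^ 2 / z.1 j ^ 2
    else 0)
  + ∑ i : Fin n, if n - m ≤ (i : ℕ) then b i else 0

theorem final_sum {n : ℕ} (b : Fin n → ℝ) (z : (Fin n → ℝ) × (Fin n → ℝ))
    (hz : ∀ i, z.1 i ≠ 0) (N D : ℝ) (hD : D ≠ 0) (P : Fin n → Prop) [DecidablePred P] :
    ∑ k : Fin n,
      ((-(N * (4 * z.1 k)) * (D ^ 2)⁻¹ - 2 * b k * (z.1 k ^ 3 * D)⁻¹) *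
          (∑ i : Fin n, ∑ j ∈ Finset.Ioi i, (if P i then (1:ℝ) else 0) *
            (2 * (z.1 i * z.2 j - z.1 j * z.2 i)
              * (z.1 i * (if j = k then (1:ℝ) else 0) - z.1 j * (if i = k then (1:ℝ) else 0))))
        - (2 * z.2 k * D⁻¹) *
          (∑ i : Fin n, ∑ j ∈ Finset.Ioi i, (if P i then (1:ℝ) else 0) *
            (2 * (z.1 i * z.2 j - z.1 j * z.2 i)
                * (z.2 j * (if i = k then (1:ℝ) else 0) - z.2 i * (if j = k then (1:ℝ) else 0))
              + (2 * b i * z.1 j * (z.1 i ^ 2)⁻¹) * (if j = k then (1:ℝ) else 0)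
              - (2 * b i * z.1 j ^ 2 * (z.1 i ^ 3)⁻¹) * (if i = k then (1:ℝ) else 0)
              + (2 * b j * z.1 i * (z.1 j ^ 2)⁻¹) * (if i = k then (1:ℝ) else 0)
              - (2 * b j * z.1 i ^ 2 * (z.1 j ^ 3)⁻¹) * (if j = k then (1:ℝ) else 0)))) = 0 := by
  simp only [Finset.mul_sum, ← Finset.sum_sub_distrib]
  rw [Finset.sum_comm]
  refine Finset.sum_eq_zero fun i _ => ?_
  rw [Finset.sum_comm]
  refine Finset.sum_eq_zero fun j hj => ?_
  have hij : i ≠ j := (Finset.mem_Ioi.mp hj).ne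
  by_cases hP : P i
  · simp only [hP, if_true, one_mul]
    rw [Finset.sum_eq_add_of_mem i j (Finset.mem_univ i) (Finset.mem_univ j) hij ?_]
    · have h1 : (i = i) = True := by simp
      have h2 : (j = i) = False := by simp [hij.symm]
      have h3 : (i = j) = False := by simp [hij]
      have h4 : (j = j) = True := by simp
      simp only [h1, h2, h3, h4, if_true, if_false, mul_one, mul_zero, zero_mul,
        sub_zero, zero_sub, add_zero, zero_add]
      field_simp [hz i, hz j, hD]
      ring
    · intro k hk ⟨hki, hkj⟩
      have h2 : (j = k) = False := by simp [Ne.symm hkj]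
      have h3 : (i = k) = False := by simp [Ne.symm hki]
      simp [h2, h3]
  · simp [hP]

open ContinuousLinearMap in
/-- The Hamiltonian H = (|p|² − c + Σⱼ bⱼqⱼ⁻²)/(2(κ + |q|²)) Poisson-commutes
with every right partial Casimir C_(m), 1 < m ≤ n, on Ω. -/
theorem hamiltonian_commutes_right_casimirs (n : ℕ) (hn : 2 ≤ n)
    (κ c : ℝ) (hκ : 0 < κ) (b : Fin n → ℝ)
    (H : (Fin n → ℝ) × (Fin n → ℝ) → ℝ)
    (hH : H = fun z =>
      ((∑ i, z.2 i ^ 2) - c + ∑ j, b j * (z.1 j ^ 2)⁻¹) / (2 * (κ + ∑ i, z.1 i ^ 2))) :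
    ∀ m : ℕ, 1 < m → m ≤ n →
      ∀ z : (Fin n → ℝ) × (Fin n → ℝ), (∀ i, z.1 i ≠ 0) →
        poissonBracket n H (rightCasimir n b m) z = 0 := by
  intro m hm1 hmn z hz
  have hD : (2 * (κ + ∑ i, z.1 i ^ 2)) ≠ 0 := by positivity
  -- basic derivatives
  have hq : ∀ i : Fin n, HasFDerivAt (fun w : (Fin n → ℝ) × (Fin n → ℝ) => w.1 i)
      ((proj i).comp (fst ℝ (Fin n → ℝ) (Fin n → ℝ))) z :=
    fun i => ((proj i).comp (fst ℝ (Fin n → ℝ) (Fin n → ℝ))).hasFDerivAt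
  have hp : ∀ i : Fin n, HasFDerivAt (fun w : (Fin n → ℝ) × (Fin n → ℝ) => w.2 i)
      ((proj i).comp (snd ℝ (Fin n → ℝ) (Fin n → ℝ))) z :=
    fun i => ((proj i).comp (snd ℝ (Fin n → ℝ) (Fin n → ℝ))).hasFDerivAt
  have hq2 := fun i : Fin n => (hasDerivAt_pow 2 (z.1 i)).comp_hasFDerivAt z (hq i)
  have hp2 := fun i : Fin n => (hasDerivAt_pow 2 (z.2 i)).comp_hasFDerivAt z (hp i)
  have hinv := fun i : Fin n =>
    ((hasDerivAt_pow 2 (z.1 i)).inv (pow_ne_zero 2 (hz i))).comp_hasFDerivAt z (hq i)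
  -- derivative of H
  obtain ⟨LH, hLH, hLHq, hLHp⟩ :
      ∃ L : ((Fin n → ℝ) × (Fin n → ℝ)) →L[ℝ] ℝ,
        HasFDerivAt H L z ∧
        (∀ k, L (Pi.single k 1, 0) =
          -(((∑ i, z.2 i ^ 2) - c + ∑ j, b j * (z.1 j ^ 2)⁻¹) * (4 * z.1 k))
              * ((2 * (κ + ∑ i, z.1 i ^ 2)) ^ 2)⁻¹
            - 2 * b k * (z.1 k ^ 3 * (2 * (κ + ∑ i, z.1 i ^ 2)))⁻¹) ∧
        (∀ k, L (0, Pi.single k 1) = 2 * z.2 k * (2 * (κ + ∑ i, z.1 i ^ 2))⁻¹) := by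
    have hNum := ((HasFDerivAt.fun_sum (u := Finset.univ) fun i _ => hp2 i).sub_const c).add
        (HasFDerivAt.fun_sum (u := Finset.univ) fun j _ => (hinv j).const_mul (b j))
    have hDen := ((HasFDerivAt.fun_sum (u := Finset.univ) fun i _ => hq2 i).const_add κ).const_mul (2:ℝ)
    have hDenInv := (hasDerivAt_inv hD).comp_hasFDerivAt z hDen
    have hHd : H = fun w : (Fin n → ℝ) × (Fin n → ℝ) =>
        ((∑ i, w.2 i ^ 2) - c + ∑ j, b j * (w.1 j ^ 2)⁻¹)
          * (2 * (κ + ∑ i, w.1 i ^ 2))⁻¹ := by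
      rw [hH]; funext w; rw [div_eq_mul_inv]
    refine ⟨_, by rw [hHd]; exact hNum.mul hDenInv, ?_, ?_⟩
    · intro k
      simp [ContinuousLinearMap.smul_apply, ContinuousLinearMap.add_apply,
        ContinuousLinearMap.sub_apply, ContinuousLinearMap.sum_apply,
        ContinuousLinearMap.coe_comp', Function.comp, Pi.single_apply,
        Finset.sum_ite_eq', smul_eq_mul]
      field_simp [hz k, hD]
      ring
    · intro k
      simp [ContinuousLinearMap.smul_apply, ContinuousLinearMap.add_apply,
        ContinuousLinearMap.sub_apply, ContinuousLinearMap.sum_apply,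
        ContinuousLinearMap.coe_comp', Function.comp, Pi.single_apply,
        Finset.sum_ite_eq', smul_eq_mul]
      field_simp [hz k, hD]
  -- derivative of the Casimir
  obtain ⟨LC, hLC, hLCq, hLCp⟩ :
      ∃ L : ((Fin n → ℝ) × (Fin n → ℝ)) →L[ℝ] ℝ,
        HasFDerivAt (rightCasimir n b m) L z ∧
        (∀ k, L (Pi.single k 1, 0) =
          ∑ i : Fin n, ∑ j ∈ Finset.Ioi i, (if n - m ≤ (i : ℕ) then (1:ℝ) else 0) *
            (2 * (z.1 i * z.2 j - z.1 j * z.2 i)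
                * (z.2 j * (if i = k then (1:ℝ) else 0) - z.2 i * (if j = k then (1:ℝ) else 0))
              + (2 * b i * z.1 j * (z.1 i ^ 2)⁻¹) * (if j = k then (1:ℝ) else 0)
              - (2 * b i * z.1 j ^ 2 * (z.1 i ^ 3)⁻¹) * (if i = k then (1:ℝ) else 0)
              + (2 * b j * z.1 i * (z.1 j ^ 2)⁻¹) * (if i = k then (1:ℝ) else 0)
              - (2 * b j * z.1 i ^ 2 * (z.1 j ^ 3)⁻¹) * (if j = k then (1:ℝ) else 0))) ∧
        (∀ k, L (0, Pi.single k 1) =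
          ∑ i : Fin n, ∑ j ∈ Finset.Ioi i, (if n - m ≤ (i : ℕ) then (1:ℝ) else 0) *
            (2 * (z.1 i * z.2 j - z.1 j * z.2 i)
              * (z.1 i * (if j = k then (1:ℝ) else 0)
                  - z.1 j * (if i = k then (1:ℝ) else 0)))) := by
    have hA := fun i j : Fin n => ((hq i).mul (hp j)).sub ((hq j).mul (hp i))
    have hterm := fun i j : Fin n =>
      ((((hasDerivAt_pow 2 (z.1 i * z.2 j - z.1 j * z.2 i)).comp_hasFDerivAt z (hA i j)).add
        (((hq2 j).const_mul (b i)).mul (hinv i))).add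
        (((hq2 i).const_mul (b j)).mul (hinv j))).const_mul
          (if n - m ≤ (i : ℕ) then (1:ℝ) else 0)
    have hCd : rightCasimir n b m = fun w : (Fin n → ℝ) × (Fin n → ℝ) =>
        (∑ i : Fin n, ∑ j ∈ Finset.Ioi i, (if n - m ≤ (i : ℕ) then (1:ℝ) else 0) *
          ((w.1 i * w.2 j - w.1 j * w.2 i) ^ 2
            + b i * w.1 j ^ 2 * (w.1 i ^ 2)⁻¹ + b j * w.1 i ^ 2 * (w.1 j ^ 2)⁻¹))
        + ∑ i : Fin n, (if n - m ≤ (i : ℕ) then b i else 0) := by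
      funext w
      simp only [rightCasimir]
      congr 1
      refine Finset.sum_congr rfl fun i _ => Finset.sum_congr rfl fun j _ => ?_
      split_ifs with h <;> simp [div_eq_mul_inv]
    refine ⟨_, hCd ▸ (HasFDerivAt.fun_sum (u := Finset.univ) fun i _ =>
        HasFDerivAt.fun_sum (u := Finset.Ioi i) fun j _ => hterm i j).add_const _, ?_, ?_⟩
    · intro k
      simp only [ContinuousLinearMap.smul_apply, ContinuousLinearMap.add_apply,
        ContinuousLinearMap.sub_apply, ContinuousLinearMap.sum_apply,
        ContinuousLinearMap.coe_comp', Function.comp, ContinuousLinearMap.coe_fst',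
        ContinuousLinearMap.coe_snd', Pi.single_apply, smul_eq_mul,
        ContinuousLinearMap.proj_apply, Pi.zero_apply]
      refine Finset.sum_congr rfl fun i _ => Finset.sum_congr rfl fun j hj => ?_
      congr 1
      by_cases h1 : i = k <;> by_cases h2 : j = k <;>
        simp [h1, h2] <;> field_simp [hz i, hz j, hz k] <;> ring
    · intro k
      simp only [ContinuousLinearMap.smul_apply, ContinuousLinearMap.add_apply,
        ContinuousLinearMap.sub_apply, ContinuousLinearMap.sum_apply,
        ContinuousLinearMap.coe_comp', Function.comp, ContinuousLinearMap.coe_fst',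
        ContinuousLinearMap.coe_snd', Pi.single_apply, smul_eq_mul,
        ContinuousLinearMap.proj_apply, Pi.zero_apply]
      refine Finset.sum_congr rfl fun i _ => Finset.sum_congr rfl fun j hj => ?_
      congr 1
      by_cases h1 : i = k <;> by_cases h2 : j = k <;>
        simp [h1, h2] <;> field_simp [hz i, hz j, hz k] <;> ring
  -- assemble
  simp only [poissonBracket, hLH.fderiv, hLC.fderiv, hLHq, hLHp, hLCq, hLCp]
  exact final_sum b z hz _ _ hD (fun i => n - m ≤ (i : ℕ))
end

section
/- Let n ≥ 2 and b₁,…,bₙ ∈ ℝ. For each integer m with 1 < m ≤ n define the left partial Casimir C^(m)(q,p) = Σ_{1≤i<j≤m} [ (qᵢpⱼ − qⱼpᵢ)² + bᵢqⱼ²/qᵢ² + bⱼqᵢ²/qⱼ² ] + Σ_{i=1}^m bᵢ and the right partial Casimir C_(m)(q,p) = Σ_{n−m<i<j≤n} [ (qᵢpⱼ − qⱼpᵢ)² + bᵢqⱼ²/qᵢ² + bⱼqᵢ²/qⱼ² ] + Σ_{i=n−m+1}^n bᵢ. Then the left partial Casimirs are pairwise in involution, {C^(l), C^(m)} = 0 for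 all 1 < l, m ≤ n, and likewise the right partial Casimirs satisfy {C_(l), C_(m)} = 0 for all 1 < l, m ≤ n, on the open set where all qᵢ are nonzero. -/
section Aux
open Finset

variable {n : ℕ}

noncomputable def Qc (i : Fin n) : ((Fin n → ℝ) × (Fin n → ℝ)) →L[ℝ] ℝ :=
  (ContinuousLinearMap.proj i).comp (ContinuousLinearMap.fst ℝ (Fin n → ℝ) (Fin n → ℝ))

noncomputable def Pc (i : Fin n) : ((Fin n → ℝ) × (Fin n → ℝ)) →L[ℝ] ℝ :=
  (ContinuousLinearMap.proj i).comp (ContinuousLinearMap.snd ℝ (Fin n → ℝ) (Fin n → ℝ))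

lemma Qc_apply (i : Fin n) (v : (Fin n → ℝ) × (Fin n → ℝ)) : Qc i v = v.1 i := rfl
lemma Pc_apply (i : Fin n) (v : (Fin n → ℝ) × (Fin n → ℝ)) : Pc i v = v.2 i := rfl

lemma hasFDerivAt_Q (i : Fin n) (z : (Fin n → ℝ) × (Fin n → ℝ)) :
    HasFDerivAt (fun z : (Fin n → ℝ) × (Fin n → ℝ) => z.1 i) (Qc i) z := (Qc i).hasFDerivAt

lemma hasFDerivAt_P (i : Fin n) (z : (Fin n → ℝ) × (Fin n → ℝ)) :
    HasFDerivAt (fun z : (Fin n → ℝ) × (Fin n → ℝ) => z.2 i) (Pc i) z := (Pc i).hasFDerivAt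

/-- pair term -/
noncomputable def Tfun (b : Fin n → ℝ) (i j : Fin n) (z : (Fin n → ℝ) × (Fin n → ℝ)) : ℝ :=
  (z.1 i * z.2 j - z.1 j * z.2 i) ^ 2 + b i * z.1 j ^ 2 / z.1 i ^ 2 + b j * z.1 i ^ 2 / z.1 j ^ 2

/-- ∂T_{ki}/∂q_k -/
noncomputable def Bq (b : Fin n → ℝ) (z : (Fin n → ℝ) × (Fin n → ℝ)) (k i : Fin n) : ℝ :=
  2 * (z.1 k * z.2 i - z.1 i * z.2 k) * z.2 i + 2 * b i * z.1 k / z.1 i ^ 2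
    - 2 * b k * z.1 i ^ 2 / z.1 k ^ 3

/-- ∂T_{ki}/∂p_k -/
noncomputable def Bp (z : (Fin n → ℝ) × (Fin n → ℝ)) (k i : Fin n) : ℝ :=
  2 * (z.1 i * z.2 k - z.1 k * z.2 i) * z.1 i

noncomputable def Tderiv (b : Fin n → ℝ) (z : (Fin n → ℝ) × (Fin n → ℝ)) (i j : Fin n) :
    ((Fin n → ℝ) × (Fin n → ℝ)) →L[ℝ] ℝ :=
  Bq b z i j • Qc i + Bq b z j i • Qc j + Bp z i j • Pc i + Bp z j i • Pc j

lemma hasFDerivAt_T (b : Fin n → ℝ) (i j : Fin n) (z : (Fin n → ℝ) × (Fin n → ℝ))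
    (hi : z.1 i ≠ 0) (hj : z.1 j ≠ 0) :
    HasFDerivAt (Tfun b i j) (Tderiv b z i j) z := by
  have hL : HasFDerivAt (fun z : (Fin n → ℝ) × (Fin n → ℝ) => z.1 i * z.2 j - z.1 j * z.2 i)
      (z.1 i • Pc j + z.2 j • Qc i - (z.1 j • Pc i + z.2 i • Qc j)) z :=
    ((hasFDerivAt_Q i z).mul (hasFDerivAt_P j z)).sub ((hasFDerivAt_Q j z).mul (hasFDerivAt_P i z))
  have hi2 : z.1 i * z.1 i ≠ 0 := mul_ne_zero hi hi
  have hj2 : z.1 j * z.1 j ≠ 0 := mul_ne_zero hj hj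
  have hQi2 := (hasFDerivAt_Q i z).mul (hasFDerivAt_Q i z)
  have hQj2 := (hasFDerivAt_Q j z).mul (hasFDerivAt_Q j z)
  have hinvI := (hasDerivAt_inv hi2).comp_hasFDerivAt z hQi2
  have hinvJ := (hasDerivAt_inv hj2).comp_hasFDerivAt z hQj2
  have hT := ((hL.mul hL).add
      (((hasFDerivAt_const (b i) z).mul hQj2).mul hinvI)).add
      (((hasFDerivAt_const (b j) z).mul hQi2).mul hinvJ)
  have hfun : Tfun b i j = (fun z : (Fin n → ℝ) × (Fin n → ℝ) =>
      ((z.1 i * z.2 j - z.1 j * z.2 i) * (z.1 i * z.2 j - z.1 j * z.2 i)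
        + b i * (z.1 j * z.1 j) * (z.1 i * z.1 i)⁻¹)
        + b j * (z.1 i * z.1 i) * (z.1 j * z.1 j)⁻¹) := by
    funext w
    unfold Tfun
    ring
  rw [hfun]
  refine hT.congr_fderiv ?_
  refine ContinuousLinearMap.ext fun v => ?_
  simp only [Tderiv, Function.comp_def, ContinuousLinearMap.add_apply, ContinuousLinearMap.sub_apply,
    ContinuousLinearMap.smul_apply, ContinuousLinearMap.zero_apply, Qc_apply, Pc_apply,
    smul_eq_mul, Bq, Bp, ContinuousLinearMap.coe_smul', Pi.smul_apply, Pi.mul_apply]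
  field_simp
  ring

noncomputable def cas (b : Fin n → ℝ) (S : Finset (Fin n)) (z : (Fin n → ℝ) × (Fin n → ℝ)) : ℝ :=
  (∑ i : Fin n, ∑ j ∈ Finset.Ioi i, if i ∈ S ∧ j ∈ S then Tfun b i j z else 0) + ∑ i ∈ S, b i

noncomputable def casDeriv (b : Fin n → ℝ) (S : Finset (Fin n))
    (z : (Fin n → ℝ) × (Fin n → ℝ)) : ((Fin n → ℝ) × (Fin n → ℝ)) →L[ℝ] ℝ :=
  ∑ i : Fin n, ∑ j ∈ Finset.Ioi i, if i ∈ S ∧ j ∈ S then Tderiv b z i j else 0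

lemma hasFDerivAt_cas (b : Fin n → ℝ) (S : Finset (Fin n)) (z : (Fin n → ℝ) × (Fin n → ℝ))
    (hz : ∀ i, z.1 i ≠ 0) : HasFDerivAt (cas b S) (casDeriv b S z) z := by
  have h1 : HasFDerivAt
      (fun z : (Fin n → ℝ) × (Fin n → ℝ) =>
        ∑ i : Fin n, ∑ j ∈ Finset.Ioi i, if i ∈ S ∧ j ∈ S then Tfun b i j z else 0)
      (casDeriv b S z) z := by
    apply HasFDerivAt.fun_sum
    intro i _
    apply HasFDerivAt.fun_sum
    intro j _
    split_ifs with h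
    · exact hasFDerivAt_T b i j z (hz i) (hz j)
    · exact hasFDerivAt_const 0 z
  exact h1.add_const _

lemma Tderiv_apply_q (b : Fin n → ℝ) (z : (Fin n → ℝ) × (Fin n → ℝ)) (i j k : Fin n)
    (hij : i ≠ j) :
    Tderiv b z i j (Pi.single k 1, (0 : Fin n → ℝ))
      = (if i = k then Bq b z i j else 0) + (if j = k then Bq b z j i else 0) := by
  simp only [Tderiv, ContinuousLinearMap.add_apply, ContinuousLinearMap.smul_apply,
    Qc_apply, Pc_apply, smul_eq_mul, Pi.single_apply, Pi.zero_apply, mul_zero, mul_ite,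
    mul_one, add_zero]

lemma Tderiv_apply_p (b : Fin n → ℝ) (z : (Fin n → ℝ) × (Fin n → ℝ)) (i j k : Fin n)
    (hij : i ≠ j) :
    Tderiv b z i j ((0 : Fin n → ℝ), Pi.single k 1)
      = (if i = k then Bp z i j else 0) + (if j = k then Bp z j i else 0) := by
  simp only [Tderiv, ContinuousLinearMap.add_apply, ContinuousLinearMap.smul_apply,
    Qc_apply, Pc_apply, smul_eq_mul, Pi.single_apply, Pi.zero_apply, mul_zero, mul_ite,
    mul_one, add_zero, zero_add]

lemma Ioi_union_Iio (i : Fin n) :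
    Finset.Ioi i ∪ Finset.Iio i = Finset.univ.erase i := by
  ext j
  simp [Finset.mem_erase, or_comm, ne_comm, lt_or_lt_iff_ne]

lemma sum_pairs (h : Fin n → Fin n → ℝ) :
    (∑ i : Fin n, ∑ j ∈ Finset.Ioi i, (h i j + h j i))
      = ∑ i : Fin n, ∑ j ∈ Finset.univ.erase i, h i j := by
  have h2 : (∑ i : Fin n, ∑ j ∈ Finset.Ioi i, h j i)
      = ∑ i : Fin n, ∑ j ∈ Finset.Iio i, h i j := by
    exact Finset.sum_comm' (by intro i j; simp [and_comm])
  calc (∑ i : Fin n, ∑ j ∈ Finset.Ioi i, (h i j + h j i))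
      = (∑ i : Fin n, ∑ j ∈ Finset.Ioi i, h i j) + ∑ i : Fin n, ∑ j ∈ Finset.Ioi i, h j i := by
        rw [← Finset.sum_add_distrib]
        exact Finset.sum_congr rfl fun i _ => Finset.sum_add_distrib
    _ = ∑ i : Fin n, ((∑ j ∈ Finset.Ioi i, h i j) + ∑ j ∈ Finset.Iio i, h i j) := by
        rw [h2, Finset.sum_add_distrib]
    _ = ∑ i : Fin n, ∑ j ∈ Finset.univ.erase i, h i j := by
        refine Finset.sum_congr rfl fun i _ => ?_
        rw [← Ioi_union_Iio i, Finset.sum_union]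
        exact Finset.disjoint_left.2 fun j hj hj' => absurd (Finset.mem_Iio.1 hj')
          (not_lt.2 (le_of_lt (Finset.mem_Ioi.1 hj)))

lemma casDeriv_eval (b : Fin n → ℝ) (S : Finset (Fin n)) (z : (Fin n → ℝ) × (Fin n → ℝ))
    (k : Fin n) (g : Fin n → Fin n → ℝ) (v : (Fin n → ℝ) × (Fin n → ℝ))
    (hv : ∀ i j : Fin n, i ≠ j → Tderiv b z i j v
      = (if i = k then g i j else 0) + (if j = k then g j i else 0)) :
    casDeriv b S z v = if k ∈ S then ∑ i ∈ S.erase k, g k i else 0 := by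
  have hH : casDeriv b S z v = ∑ i : Fin n, ∑ j ∈ Finset.Ioi i,
      ((if (i ∈ S ∧ j ∈ S) ∧ i = k then g i j else 0)
        + (if (j ∈ S ∧ i ∈ S) ∧ j = k then g j i else 0)) := by
    simp only [casDeriv, ContinuousLinearMap.coe_sum', Finset.sum_apply]
    refine Finset.sum_congr rfl fun i _ => Finset.sum_congr rfl fun j hj => ?_
    have hij : i ≠ j := ne_of_lt (Finset.mem_Ioi.1 hj)
    by_cases hS : i ∈ S ∧ j ∈ S
    · simp only [hS, if_true, hv i j hij, hS.1, hS.2, and_self, true_and]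
    · have hS' : ¬ (j ∈ S ∧ i ∈ S) := fun h => hS ⟨h.2, h.1⟩
      simp [hS, hS']
  rw [hH, sum_pairs (fun i j => if (i ∈ S ∧ j ∈ S) ∧ i = k then g i j else 0)]
  have hcol : ∀ i : Fin n, (∑ j ∈ Finset.univ.erase i,
      if (i ∈ S ∧ j ∈ S) ∧ i = k then g i j else 0)
      = if i = k then (∑ j ∈ Finset.univ.erase k, if k ∈ S ∧ j ∈ S then g k j else 0) else 0 := by
    intro i
    by_cases hik : i = k
    · subst hik; simp
    · simp [hik]
  rw [Finset.sum_congr rfl fun i _ => hcol i, Finset.sum_ite_eq' Finset.univ k]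
  simp only [Finset.mem_univ, if_true]
  by_cases hk : k ∈ S
  · simp only [hk, true_and, if_true]
    rw [Finset.sum_ite_mem]
    congr 1
    ext j
    simp [Finset.mem_erase, and_comm]
  · simp [hk]

lemma three_index (b : Fin n → ℝ) (z : (Fin n → ℝ) × (Fin n → ℝ)) (hz : ∀ i, z.1 i ≠ 0)
    (k i j : Fin n) :
    (Bq b z k i * Bp z k j - Bp z k i * Bq b z k j)
      + (Bq b z i k * Bp z i j - Bp z i k * Bq b z i j) = 0 := by
  have hk := hz k
  have hi := hz i
  have hj := hz j
  unfold Bq Bp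
  field_simp
  ring

lemma sum_antisym (S : Finset (Fin n)) (F : Fin n → Fin n → ℝ)
    (hF : ∀ k i, F k i + F i k = 0) :
    ∑ k ∈ S, ∑ i ∈ S.erase k, F k i = 0 := by
  have h1 : (∑ k ∈ S, ∑ i ∈ S.erase k, F k i) = ∑ k ∈ S, ∑ i ∈ S.erase k, F i k := by
    have := Finset.sum_comm' (s := S) (t := fun k => S.erase k) (t' := S)
      (s' := fun i => S.erase i) (f := F)
      (by intro x y; simp only [Finset.mem_erase]; constructor
          · rintro ⟨hx, hy, hyS⟩; exact ⟨⟨fun h => hy (h.symm ▸ rfl), hx⟩, hyS⟩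
          · rintro ⟨⟨hx, hxS⟩, hyS⟩; exact ⟨hxS, fun h => hx (h ▸ rfl), hyS⟩)
    rw [this]
  have h2 : (∑ k ∈ S, ∑ i ∈ S.erase k, F k i) + (∑ k ∈ S, ∑ i ∈ S.erase k, F i k) = 0 := by
    rw [← Finset.sum_add_distrib]
    refine Finset.sum_eq_zero fun k _ => ?_
    rw [← Finset.sum_add_distrib]
    exact Finset.sum_eq_zero fun i _ => hF k i
  linarith

lemma cas_bracket (b : Fin n → ℝ) (S T : Finset (Fin n)) (hST : S ⊆ T)
    (z : (Fin n → ℝ) × (Fin n → ℝ)) (hz : ∀ i, z.1 i ≠ 0) :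
    poissonBracket n (cas b S) (cas b T) z = 0 := by
  unfold poissonBracket
  rw [(hasFDerivAt_cas b S z hz).fderiv, (hasFDerivAt_cas b T z hz).fderiv]
  have eqq : ∀ (U : Finset (Fin n)) (k : Fin n),
      casDeriv b U z (Pi.single k 1, (0 : Fin n → ℝ))
        = if k ∈ U then ∑ i ∈ U.erase k, Bq b z k i else 0 := fun U k =>
    casDeriv_eval b U z k (Bq b z) _ (fun i j hij => Tderiv_apply_q b z i j k hij)
  have eqp : ∀ (U : Finset (Fin n)) (k : Fin n),
      casDeriv b U z ((0 : Fin n → ℝ), Pi.single k 1)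
        = if k ∈ U then ∑ i ∈ U.erase k, Bp z k i else 0 := fun U k =>
    casDeriv_eval b U z k (Bp z) _ (fun i j hij => Tderiv_apply_p b z i j k hij)
  have step : ∀ k : Fin n,
      casDeriv b S z (Pi.single k 1, (0 : Fin n → ℝ)) * casDeriv b T z ((0 : Fin n → ℝ), Pi.single k 1)
        - casDeriv b S z ((0 : Fin n → ℝ), Pi.single k 1) * casDeriv b T z (Pi.single k 1, (0 : Fin n → ℝ))
      = if k ∈ S then ∑ i ∈ S.erase k, ∑ j ∈ T \ S,
          (Bq b z k i * Bp z k j - Bp z k i * Bq b z k j) else 0 := by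
    intro k
    rw [eqq S k, eqq T k, eqp S k, eqp T k]
    by_cases hk : k ∈ S
    · have hkT : k ∈ T := hST hk
      simp only [hk, hkT, if_true]
      have hsub : S.erase k ⊆ T.erase k := Finset.erase_subset_erase k hST
      have hsd : T.erase k \ S.erase k = T \ S := by
        ext x
        simp only [Finset.mem_sdiff, Finset.mem_erase]
        constructor
        · rintro ⟨⟨hxk, hxT⟩, h2⟩
          exact ⟨hxT, fun hxS => h2 ⟨hxk, hxS⟩⟩
        · rintro ⟨hxT, hxS⟩
          exact ⟨⟨fun h => hxS (h ▸ hk), hxT⟩, fun h => hxS h.2⟩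
      rw [← Finset.sum_sdiff hsub (f := fun i => Bp z k i),
          ← Finset.sum_sdiff hsub (f := fun i => Bq b z k i), hsd]
      have e1 : (∑ i ∈ S.erase k, ∑ j ∈ T \ S,
          (Bq b z k i * Bp z k j - Bp z k i * Bq b z k j))
          = (∑ i ∈ S.erase k, Bq b z k i) * (∑ j ∈ T \ S, Bp z k j)
            - (∑ i ∈ S.erase k, Bp z k i) * (∑ j ∈ T \ S, Bq b z k j) := by
        rw [Finset.sum_mul_sum, Finset.sum_mul_sum, ← Finset.sum_sub_distrib]
        refine Finset.sum_congr rfl fun i _ => ?_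
        rw [← Finset.sum_sub_distrib]
      rw [e1]
      ring
    · simp [hk]
  rw [Finset.sum_congr rfl fun k _ => step k]
  rw [Finset.sum_ite_mem, Finset.univ_inter]
  exact sum_antisym S _ (fun k i => by
    rw [← Finset.sum_add_distrib]
    exact Finset.sum_eq_zero fun j _ => three_index b z hz k i j)

lemma pb_anti (n : ℕ) (f g : (Fin n → ℝ) × (Fin n → ℝ) → ℝ) (z : (Fin n → ℝ) × (Fin n → ℝ)) :
    poissonBracket n f g z = - poissonBracket n g f z := by
  unfold poissonBracket
  rw [← Finset.sum_neg_distrib]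
  exact Finset.sum_congr rfl fun i _ => by ring

lemma left_eq (n : ℕ) (b : Fin n → ℝ) (m : ℕ) :
    leftCasimir n b m = cas b (Finset.univ.filter fun i : Fin n => (i : ℕ) < m) := by
  funext z
  unfold leftCasimir cas
  congr 1
  · refine Finset.sum_congr rfl fun i _ => Finset.sum_congr rfl fun j hj => ?_
    have hij : i < j := Finset.mem_Ioi.1 hj
    have hcond : ((j : ℕ) < m) ↔ (i ∈ Finset.univ.filter fun i : Fin n => (i : ℕ) < m)
        ∧ (j ∈ Finset.univ.filter fun i : Fin n => (i : ℕ) < m) := by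
      simp only [Finset.mem_filter, Finset.mem_univ, true_and]
      have : (i : ℕ) < (j : ℕ) := hij
      omega
    rw [if_congr hcond rfl rfl]
    rfl
  · rw [Finset.sum_filter]

lemma right_eq (n : ℕ) (b : Fin n → ℝ) (m : ℕ) :
    rightCasimir n b m = cas b (Finset.univ.filter fun i : Fin n => n - m ≤ (i : ℕ)) := by
  funext z
  unfold rightCasimir cas
  congr 1
  · refine Finset.sum_congr rfl fun i _ => Finset.sum_congr rfl fun j hj => ?_
    have hij : i < j := Finset.mem_Ioi.1 hj
    have hcond : (n - m ≤ (i : ℕ)) ↔ (i ∈ Finset.univ.filter fun i : Fin n => n - m ≤ (i : ℕ))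
        ∧ (j ∈ Finset.univ.filter fun i : Fin n => n - m ≤ (i : ℕ)) := by
      simp only [Finset.mem_filter, Finset.mem_univ, true_and]
      have : (i : ℕ) < (j : ℕ) := hij
      omega
    rw [if_congr hcond rfl rfl]
    rfl
  · rw [Finset.sum_filter]


end Aux

/-- The left partial Casimirs are pairwise in involution, and so are the right
partial Casimirs, on the open set where all qᵢ are nonzero. -/
theorem partial_casimirs_in_involution (n : ℕ) (hn : 2 ≤ n) (b : Fin n → ℝ) :
    ∀ l m : ℕ, 1 < l → l ≤ n → 1 < m → m ≤ n →
      ∀ z : (Fin n → ℝ) × (Fin n → ℝ), (∀ i, z.1 i ≠ 0) →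
        poissonBracket n (leftCasimir n b l) (leftCasimir n b m) z = 0 ∧
        poissonBracket n (rightCasimir n b l) (rightCasimir n b m) z = 0 := by
  intro l m hl1 hln hm1 hmn z hz
  have hmonoL : ∀ a c : ℕ, a ≤ c →
      (Finset.univ.filter fun i : Fin n => (i : ℕ) < a)
        ⊆ (Finset.univ.filter fun i : Fin n => (i : ℕ) < c) := by
    intro a c hac x hx
    simp only [Finset.mem_filter, Finset.mem_univ, true_and] at *
    omega
  have hmonoR : ∀ a c : ℕ, a ≤ c →
      (Finset.univ.filter fun i : Fin n => n - a ≤ (i : ℕ))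
        ⊆ (Finset.univ.filter fun i : Fin n => n - c ≤ (i : ℕ)) := by
    intro a c hac x hx
    simp only [Finset.mem_filter, Finset.mem_univ, true_and] at *
    omega
  constructor
  · rw [left_eq n b l, left_eq n b m]
    rcases le_total l m with h | h
    · exact cas_bracket b _ _ (hmonoL l m h) z hz
    · rw [pb_anti, cas_bracket b _ _ (hmonoL m l h) z hz, neg_zero]
  · rw [right_eq n b l, right_eq n b m]
    rcases le_total l m with h | h
    · exact cas_bracket b _ _ (hmonoR l m h) z hz
    · rw [pb_anti, cas_bracket b _ _ (hmonoR m l h) z hz, neg_zero]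
end

section
/- Let n ≥ 1, κ > 0, c ∈ ℝ and b₁,…,bₙ ∈ ℝ. Define H(q,p) = (|p|² − c + Σⱼ bⱼ qⱼ⁻²) / (2(κ + |q|²)) and, for 1 ≤ i ≤ n, Iᵢ(q,p) = pᵢ² − 2H(q,p)·qᵢ² + bᵢ qᵢ⁻². Then Iᵢ is a first integral of H: {H, Iᵢ} = 0 on the open set where all qⱼ are nonzero, for every i. -/
/-- Each Iᵢ = pᵢ² − 2H qᵢ² + bᵢqᵢ⁻² is a first integral of
H = (|p|² − c + Σⱼ bⱼqⱼ⁻²)/(2(κ + |q|²)): {H, Iᵢ} = 0 on Ω. -/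
theorem extra_integrals (n : ℕ) (hn : 1 ≤ n) (κ c : ℝ) (hκ : 0 < κ)
    (b : Fin n → ℝ)
    (H : (Fin n → ℝ) × (Fin n → ℝ) → ℝ)
    (I : Fin n → (Fin n → ℝ) × (Fin n → ℝ) → ℝ)
    (hH : H = fun z =>
      ((∑ i, z.2 i ^ 2) - c + ∑ j, b j * (z.1 j ^ 2)⁻¹) / (2 * (κ + ∑ i, z.1 i ^ 2)))
    (hI : I = fun i z => z.2 i ^ 2 - 2 * H z * z.1 i ^ 2 + b i * (z.1 i ^ 2)⁻¹) :
    ∀ i : Fin n, ∀ z : (Fin n → ℝ) × (Fin n → ℝ), (∀ j, z.1 j ≠ 0) →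
      poissonBracket n H (I i) z = 0 := by
  intro i z hq
  have hq2 : ∀ k, z.1 k ^ 2 ≠ 0 := fun k => pow_ne_zero _ (hq k)
  have hSpos : (0:ℝ) < κ + ∑ m, z.1 m ^ 2 := by positivity
  have hS : (2 * (κ + ∑ m, z.1 m ^ 2)) ≠ 0 := by positivity
  -- coordinate differentiability
  have hdq : ∀ k, DifferentiableAt ℝ (fun w : (Fin n → ℝ) × (Fin n → ℝ) => w.1 k) z := by
    intro k; fun_prop
  have hdp : ∀ k, DifferentiableAt ℝ (fun w : (Fin n → ℝ) × (Fin n → ℝ) => w.2 k) z := by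
    intro k; fun_prop
  have hdnum : DifferentiableAt ℝ (fun w : (Fin n → ℝ) × (Fin n → ℝ) =>
      (∑ m, w.2 m ^ 2) - c + ∑ k, b k * (w.1 k ^ 2)⁻¹) z :=
    ((DifferentiableAt.fun_sum fun m _ => (hdp m).fun_pow 2).sub_const c).fun_add
      (DifferentiableAt.fun_sum fun k _ => (((hdq k).fun_pow 2).fun_inv (hq2 k)).const_mul (b k))
  have hdden : DifferentiableAt ℝ (fun w : (Fin n → ℝ) × (Fin n → ℝ) =>
      2 * (κ + ∑ m, w.1 m ^ 2)) z :=
    ((DifferentiableAt.fun_sum fun m _ => (hdq m).fun_pow 2).const_add κ).const_mul 2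
  have hdH : DifferentiableAt ℝ H z := by
    rw [hH]
    have h := hdnum.fun_mul (hdden.fun_inv hS)
    simpa [div_eq_mul_inv] using h
  have hdI : DifferentiableAt ℝ (I i) z := by
    rw [hI]
    exact (((hdp i).pow 2).sub ((hdH.const_mul 2).mul ((hdq i).pow 2))).add
      ((((hdq i).pow 2).inv (hq2 i)).const_mul (b i))
  -- derivative along a line
  have line : ∀ (f : (Fin n → ℝ) × (Fin n → ℝ) → ℝ) (v : (Fin n → ℝ) × (Fin n → ℝ)),
      DifferentiableAt ℝ f z → HasDerivAt (fun t : ℝ => f (z + t • v)) (fderiv ℝ f z v) 0 := by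
    intro f v hf
    have h1 : HasDerivAt (fun t : ℝ => z + t • v) v 0 := by
      simpa using ((hasDerivAt_id (0:ℝ)).smul_const v).const_add z
    have h2 : HasFDerivAt f (fderiv ℝ f z) (z + (0:ℝ) • v) := by
      simpa using hf.hasFDerivAt
    simpa [Function.comp_def] using h2.comp_hasDerivAt 0 h1
  -- elementary 1-d derivatives
  have hlin : ∀ a e : ℝ, HasDerivAt (fun t : ℝ => a + t * e) e 0 := by
    intro a e; simpa using ((hasDerivAt_id (0:ℝ)).mul_const e).const_add a
  have hsq : ∀ a e : ℝ, HasDerivAt (fun t : ℝ => (a + t * e) ^ 2) (2 * a * e) 0 := by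
    intro a e
    have h := (hlin a e).fun_pow 2
    norm_num at h
    convert h using 1
  have hinv : ∀ k (e : ℝ), HasDerivAt (fun t : ℝ => ((z.1 k + t * e) ^ 2)⁻¹)
      (-(2 * z.1 k * e) / (z.1 k ^ 2) ^ 2) 0 := by
    intro k e
    have h := (hsq (z.1 k) e).fun_inv (by simpa using hq2 k)
    simpa using h
  -- explicit line formulas
  have lineH : ∀ (v : (Fin n → ℝ) × (Fin n → ℝ)),
      (fun t : ℝ => H (z + t • v)) = fun t =>
        ((∑ m, (z.2 m + t * v.2 m) ^ 2) - c + ∑ k, b k * ((z.1 k + t * v.1 k) ^ 2)⁻¹) /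
          (2 * (κ + ∑ m, (z.1 m + t * v.1 m) ^ 2)) := by
    intro v; funext t; rw [hH]; simp
  have lineI : ∀ (v : (Fin n → ℝ) × (Fin n → ℝ)),
      (fun t : ℝ => I i (z + t • v)) = fun t =>
        (z.2 i + t * v.2 i) ^ 2 - 2 * H (z + t • v) * (z.1 i + t * v.1 i) ^ 2 +
          b i * ((z.1 i + t * v.1 i) ^ 2)⁻¹ := by
    intro v; funext t; rw [hI]; simp
  -- derivative of H along line, explicit
  have hHd : ∀ (v : (Fin n → ℝ) × (Fin n → ℝ)),
      HasDerivAt (fun t : ℝ => H (z + t • v))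
        ((((∑ m, 2 * z.2 m * v.2 m) + ∑ k, b k * (-(2 * z.1 k * v.1 k) / (z.1 k ^ 2) ^ 2)) *
            (2 * (κ + ∑ m, z.1 m ^ 2)) -
          ((∑ m, z.2 m ^ 2) - c + ∑ k, b k * (z.1 k ^ 2)⁻¹) *
            (2 * ∑ m, 2 * z.1 m * v.1 m)) /
          (2 * (κ + ∑ m, z.1 m ^ 2)) ^ 2) 0 := by
    intro v
    rw [lineH v]
    have hnum : HasDerivAt (fun t : ℝ =>
        (∑ m, (z.2 m + t * v.2 m) ^ 2) - c + ∑ k, b k * ((z.1 k + t * v.1 k) ^ 2)⁻¹)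
        ((∑ m, 2 * z.2 m * v.2 m) + ∑ k, b k * (-(2 * z.1 k * v.1 k) / (z.1 k ^ 2) ^ 2)) 0 :=
      ((HasDerivAt.fun_sum fun m _ => hsq (z.2 m) (v.2 m)).sub_const c).fun_add
        (HasDerivAt.fun_sum fun k _ => (hinv k (v.1 k)).const_mul (b k))
    have hden : HasDerivAt (fun t : ℝ => 2 * (κ + ∑ m, (z.1 m + t * v.1 m) ^ 2))
        (2 * ∑ m, 2 * z.1 m * v.1 m) 0 :=
      ((HasDerivAt.fun_sum fun m _ => hsq (z.1 m) (v.1 m)).const_add κ).const_mul 2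
    have h : HasDerivAt (𝕜 := ℝ) (F := ℝ) _ _ (0:ℝ) := hnum.fun_div hden (by simpa using hS)
    convert h using 2 <;> simp
  have hfH : ∀ (v : (Fin n → ℝ) × (Fin n → ℝ)), fderiv ℝ H z v =
      (((∑ m, 2 * z.2 m * v.2 m) + ∑ k, b k * (-(2 * z.1 k) / (z.1 k ^ 2) ^ 2) * v.1 k) *
          (2 * (κ + ∑ m, z.1 m ^ 2)) -
        ((∑ m, z.2 m ^ 2) - c + ∑ k, b k * (z.1 k ^ 2)⁻¹) *
          (2 * ∑ m, 2 * z.1 m * v.1 m)) /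
        (2 * (κ + ∑ m, z.1 m ^ 2)) ^ 2 := by
    intro v
    have h := (line H v hdH).unique (hHd v)
    rw [h]
    have e : ∀ k : Fin n, b k * (-(2 * z.1 k * v.1 k) / (z.1 k ^ 2) ^ 2) =
        b k * (-(2 * z.1 k) / (z.1 k ^ 2) ^ 2) * v.1 k := by intro k; ring
    simp only [e]
  -- derivative of I i
  have hfI : ∀ (v : (Fin n → ℝ) × (Fin n → ℝ)), fderiv ℝ (I i) z v =
      2 * z.2 i * v.2 i -
        (2 * fderiv ℝ H z v * z.1 i ^ 2 + 2 * H z * (2 * z.1 i * v.1 i)) +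
        b i * (-(2 * z.1 i) / (z.1 i ^ 2) ^ 2) * v.1 i := by
    intro v
    refine (line (I i) v hdI).unique ?_
    rw [lineI v]
    have hHv : HasDerivAt (fun t : ℝ => 2 * H (z + t • v)) (2 * fderiv ℝ H z v) 0 :=
      (line H v hdH).const_mul 2
    have hmid := hHv.fun_mul (hsq (z.1 i) (v.1 i))
    have h := ((hsq (z.2 i) (v.2 i)).fun_sub hmid).fun_add ((hinv i (v.1 i)).const_mul (b i))
    norm_num at h
    convert h using 1
    ring
  -- final computation
  unfold poissonBracket
  apply Finset.sum_eq_zero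
  intro j _
  simp only [hfI]
  simp only [hfH]
  simp only [hH]
  simp only [Pi.zero_apply, Pi.single_apply, mul_ite, mul_one, mul_zero, ite_mul, zero_mul,
    mul_zero, Finset.sum_const_zero, add_zero, zero_add, Finset.sum_ite_eq',
    Finset.mem_univ, if_true, zero_div, neg_zero, sub_zero, zero_sub]
  by_cases hij : i = j
  · subst hij
    simp only [↓reduceIte]
    field_simp
    ring
  · simp [hij, Ne.symm hij]
    field_simp
    ring
end

section
/- Let n ≥ 1, κ > 0, c ∈ ℝ and b₁,…,bₙ ∈ ℝ. Define H(q,p) = (|p|² − c + Σⱼ bⱼ qⱼ⁻²) / (2(κ + |q|²)) and, for 1 ≤ i ≤ n, Iᵢ(q,p) = pᵢ² − 2H(q,p)·qᵢ² + bᵢ qᵢ⁻². Then the family {I₁, …, Iₙ} is in involution: {Iᵢ, Iⱼ} = 0 for all i, j, on the open set where all qₖ are nonzero. -/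
set_option maxHeartbeats 1000000

section Helpers

variable {E : Type*} [NormedAddCommGroup E] [NormedSpace ℝ E]

theorem hasFDerivAt_sq' {f : E → ℝ} {f' : E →L[ℝ] ℝ} {x : E} (hf : HasFDerivAt f f' x) :
    HasFDerivAt (fun y => f y ^ 2) ((2 * f x) • f') x := by
  have h := hf.fun_mul hf
  have e : (fun y => f y * f y) = fun y => f y ^ 2 := funext fun y => (sq (f y)).symm
  rw [e] at h
  refine h.congr_fderiv ?_
  ext v
  simp [two_smul]
  ring

theorem hasFDerivAt_inv_comp {f : E → ℝ} {f' : E →L[ℝ] ℝ} {x : E} (hf : HasFDerivAt f f' x)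
    (hx : f x ≠ 0) : HasFDerivAt (fun y => (f y)⁻¹) ((-(f x ^ 2)⁻¹) • f') x := by
  have h := (hasDerivAt_inv hx).comp_hasFDerivAt x hf
  exact h

theorem hasFDerivAt_div' {f g : E → ℝ} {f' g' : E →L[ℝ] ℝ} {x : E} (hf : HasFDerivAt f f' x)
    (hg : HasFDerivAt g g' x) (hx : g x ≠ 0) :
    HasFDerivAt (fun y => f y / g y) ((g x)⁻¹ • f' - (f x * ((g x) ^ 2)⁻¹) • g') x := by
  have h := hf.fun_mul (hasFDerivAt_inv_comp hg hx)
  have e : (fun y => f y * (g y)⁻¹) = fun y => f y / g y :=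
    funext fun y => (div_eq_mul_inv (f y) (g y)).symm
  rw [e] at h
  refine h.congr_fderiv ?_
  ext v
  simp
  ring

noncomputable def Pq (n : ℕ) (k : Fin n) : ((Fin n → ℝ) × (Fin n → ℝ)) →L[ℝ] ℝ :=
  (ContinuousLinearMap.proj k).comp (ContinuousLinearMap.fst ℝ (Fin n → ℝ) (Fin n → ℝ))

noncomputable def Pp (n : ℕ) (k : Fin n) : ((Fin n → ℝ) × (Fin n → ℝ)) →L[ℝ] ℝ :=
  (ContinuousLinearMap.proj k).comp (ContinuousLinearMap.snd ℝ (Fin n → ℝ) (Fin n → ℝ))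

theorem key_deriv (n : ℕ) (κ c : ℝ) (b : Fin n → ℝ) (i : Fin n)
    (z : (Fin n → ℝ) × (Fin n → ℝ)) (hz : ∀ k, z.1 k ≠ 0)
    (hD : 2 * (κ + ∑ k, z.1 k ^ 2) ≠ 0) :
    ∃ L : ((Fin n → ℝ) × (Fin n → ℝ)) →L[ℝ] ℝ,
      HasFDerivAt (fun z : (Fin n → ℝ) × (Fin n → ℝ) =>
        z.2 i ^ 2 - 2 * (((∑ k, z.2 k ^ 2) - c + ∑ j, b j * (z.1 j ^ 2)⁻¹) /
          (2 * (κ + ∑ k, z.1 k ^ 2))) * z.1 i ^ 2 + b i * (z.1 i ^ 2)⁻¹) L z ∧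
      (∀ k, L (Pi.single k 1, 0) =
        2 * z.1 i ^ 2 * (4 * (((∑ m, z.2 m ^ 2) - c + ∑ j, b j * (z.1 j ^ 2)⁻¹) /
            (2 * (κ + ∑ m, z.1 m ^ 2))) * z.1 k + 2 * b k * z.1 k * ((z.1 k ^ 2)⁻¹) ^ 2) /
            (2 * (κ + ∑ m, z.1 m ^ 2))
          - (if k = i then (4 * (((∑ m, z.2 m ^ 2) - c + ∑ j, b j * (z.1 j ^ 2)⁻¹) /
            (2 * (κ + ∑ m, z.1 m ^ 2))) * z.1 i + 2 * b i * z.1 i * ((z.1 i ^ 2)⁻¹) ^ 2) else 0)) ∧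
      (∀ k, L (0, Pi.single k 1) =
        (if k = i then 2 * z.2 i else 0)
          - 4 * z.1 i ^ 2 * z.2 k / (2 * (κ + ∑ m, z.1 m ^ 2))) := by
  have hq2 : ∀ k : Fin n, z.1 k ^ 2 ≠ 0 := fun k => pow_ne_zero _ (hz k)
  have hq : ∀ k : Fin n, HasFDerivAt (fun z : (Fin n → ℝ) × (Fin n → ℝ) => z.1 k) (Pq n k) z :=
    fun k => (Pq n k).hasFDerivAt
  have hp : ∀ k : Fin n, HasFDerivAt (fun z : (Fin n → ℝ) × (Fin n → ℝ) => z.2 k) (Pp n k) z :=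
    fun k => (Pp n k).hasFDerivAt
  have h1 := HasFDerivAt.fun_sum (fun (k : Fin n) (_ : k ∈ Finset.univ) => hasFDerivAt_sq' (hp k))
  have h2 := HasFDerivAt.fun_sum (fun (j : Fin n) (_ : j ∈ Finset.univ) =>
    (hasFDerivAt_inv_comp (hasFDerivAt_sq' (hq j)) (hq2 j)).const_mul (b j))
  have hNd := (h1.sub_const c).fun_add h2
  have hDd := ((HasFDerivAt.fun_sum (fun (k : Fin n) (_ : k ∈ Finset.univ) =>
    hasFDerivAt_sq' (hq k))).const_add κ).const_mul 2
  have hHd := hasFDerivAt_div' hNd hDd hD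
  have hId := ((hasFDerivAt_sq' (hp i)).fun_sub ((hHd.const_mul 2).fun_mul (hasFDerivAt_sq' (hq i)))).fun_add
      ((hasFDerivAt_inv_comp (hasFDerivAt_sq' (hq i)) (hq2 i)).const_mul (b i))
  refine ⟨_, hId, fun k => ?_, fun k => ?_⟩
  · simp only [ContinuousLinearMap.add_apply, ContinuousLinearMap.sub_apply,
      ContinuousLinearMap.smul_apply, ContinuousLinearMap.coe_sum', Finset.sum_apply,
      Pq, Pp, ContinuousLinearMap.coe_comp', Function.comp_apply,
      ContinuousLinearMap.coe_fst', ContinuousLinearMap.coe_snd',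
      ContinuousLinearMap.proj_apply, Pi.single_apply, smul_eq_mul, Pi.zero_apply]
    simp only [mul_zero, zero_mul, mul_one, zero_add, add_zero, Finset.sum_const_zero,
      mul_ite, ite_mul, Finset.sum_ite_eq', Finset.mem_univ, if_true]
    set Q := ∑ m : Fin n, z.1 m ^ 2 with hQdef
    set P := ∑ m : Fin n, z.2 m ^ 2 with hPdef
    set B := ∑ m : Fin n, b m * (z.1 m ^ 2)⁻¹ with hBdef
    have hKQ : κ + Q ≠ 0 := by intro h; apply hD; rw [h]; ring
    set T := 2 * (κ + Q) with hTdef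
    clear_value T
    clear_value Q P B
    rcases eq_or_ne i k with rfl | hik
    · simp only [if_pos rfl]
      field_simp [hz i, hD]
      simp only [if_true]
      field_simp [hz i]
      ring
    · simp only [if_neg hik, if_neg (Ne.symm hik)]
      field_simp [hz i, hz k, hD]
      ring
  · simp only [ContinuousLinearMap.add_apply, ContinuousLinearMap.sub_apply,
      ContinuousLinearMap.smul_apply, ContinuousLinearMap.coe_sum', Finset.sum_apply,
      Pq, Pp, ContinuousLinearMap.coe_comp', Function.comp_apply,
      ContinuousLinearMap.coe_fst', ContinuousLinearMap.coe_snd',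
      ContinuousLinearMap.proj_apply, Pi.single_apply, smul_eq_mul, Pi.zero_apply]
    simp only [mul_zero, zero_mul, mul_one, zero_add, add_zero, Finset.sum_const_zero,
      mul_ite, ite_mul, Finset.sum_ite_eq', Finset.mem_univ, if_true]
    set Q := ∑ m : Fin n, z.1 m ^ 2 with hQdef
    set P := ∑ m : Fin n, z.2 m ^ 2 with hPdef
    set B := ∑ m : Fin n, b m * (z.1 m ^ 2)⁻¹ with hBdef
    have hKQ : κ + Q ≠ 0 := by intro h; apply hD; rw [h]; ring
    set T := 2 * (κ + Q) with hTdef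
    clear_value T
    clear_value Q P B
    rcases eq_or_ne i k with rfl | hik
    · simp only [if_pos rfl]
      field_simp [hz i, hD]
      ring
    · simp only [if_neg hik, if_neg (Ne.symm hik)]
      field_simp [hz i, hz k, hD]
      ring


end Helpers

/-- The family Iᵢ = pᵢ² − 2H qᵢ² + bᵢqᵢ⁻², where
H = (|p|² − c + Σⱼ bⱼqⱼ⁻²)/(2(κ + |q|²)), is in involution: {Iᵢ, Iⱼ} = 0 on Ω. -/
theorem integrals_in_involution (n : ℕ) (hn : 1 ≤ n) (κ c : ℝ) (hκ : 0 < κ)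
    (b : Fin n → ℝ)
    (H : (Fin n → ℝ) × (Fin n → ℝ) → ℝ)
    (I : Fin n → (Fin n → ℝ) × (Fin n → ℝ) → ℝ)
    (hH : H = fun z =>
      ((∑ i, z.2 i ^ 2) - c + ∑ j, b j * (z.1 j ^ 2)⁻¹) / (2 * (κ + ∑ i, z.1 i ^ 2)))
    (hI : I = fun i z => z.2 i ^ 2 - 2 * H z * z.1 i ^ 2 + b i * (z.1 i ^ 2)⁻¹) :
    ∀ i j : Fin n, ∀ z : (Fin n → ℝ) × (Fin n → ℝ), (∀ k, z.1 k ≠ 0) →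
      poissonBracket n (I i) (I j) z = 0 := by
  subst hH hI
  intro i j z hz
  have hD : 2 * (κ + ∑ k, z.1 k ^ 2) ≠ 0 := by
    have : (0:ℝ) ≤ ∑ k, z.1 k ^ 2 := Finset.sum_nonneg fun k _ => sq_nonneg _
    positivity
  obtain ⟨Li, hLi, hLiq, hLip⟩ := key_deriv n κ c b i z hz hD
  obtain ⟨Lj, hLj, hLjq, hLjp⟩ := key_deriv n κ c b j z hz hD
  unfold poissonBracket
  have fi := hLi.fderiv
  have fj := hLj.fderiv
  simp only [fi, fj]
  refine Finset.sum_eq_zero fun k _ => ?_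
  rw [hLiq k, hLip k, hLjq k, hLjp k]
  rcases eq_or_ne k i with rfl | h1 <;> rcases eq_or_ne k j with rfl | h2
  · ring
  · simp only [eq_self_iff_true, if_true, if_neg h2]
    ring
  · simp only [eq_self_iff_true, if_true, if_neg h1]
    ring
  · simp only [if_neg h1, if_neg h2]
    ring
end

section
/- Let n ≥ 1, κ > 0, c ∈ ℝ, b₁,…,bₙ ∈ ℝ, and let H(q,p) = (|p|² − c + Σⱼ bⱼ qⱼ⁻²) / (2(κ + |q|²)). Suppose (q(t), p(t)) is a differentiable curve in {(q,p) : qᵢ ≠ 0 ∀i} solving Hamilton's equations q̇ᵢ = ∂H/∂pᵢ, ṗᵢ = −∂H/∂qᵢ on an interval, and let h = H(q(0), p(0)). Then for each i, the function t ↦ (κ + |q(t)|²)² · q̇ᵢ(t)² − 2h·qᵢ(t)² + bᵢ·qᵢ(t)⁻² is constant on the interval. -/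
open ContinuousLinearMap in
theorem H_fderiv {n : ℕ} (κ c : ℝ) (hκ : 0 < κ) (b : Fin n → ℝ)
    (z : (Fin n → ℝ) × (Fin n → ℝ)) (hz : ∀ j, z.1 j ≠ 0) :
    ∃ L : ((Fin n → ℝ) × (Fin n → ℝ)) →L[ℝ] ℝ,
      HasFDerivAt (fun z : (Fin n → ℝ) × (Fin n → ℝ) =>
        ((∑ i, z.2 i ^ 2) - c + ∑ j, b j * (z.1 j ^ 2)⁻¹) /
        (2 * (κ + ∑ i, z.1 i ^ 2))) L z ∧
      (∀ i, L (0, Pi.single i 1) = z.2 i / (κ + ∑ k, z.1 k ^ 2)) ∧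
      (∀ i, L (Pi.single i 1, 0) =
        -(b i * z.1 i * ((z.1 i ^ 2) ^ 2)⁻¹) / (κ + ∑ k, z.1 k ^ 2)
        - ((∑ i, z.2 i ^ 2) - c + ∑ j, b j * (z.1 j ^ 2)⁻¹) * z.1 i /
            (κ + ∑ k, z.1 k ^ 2) ^ 2) := by
  have hA : 0 < κ + ∑ k, z.1 k ^ 2 := by positivity
  have hD : (2 : ℝ) * (κ + ∑ k, z.1 k ^ 2) ≠ 0 := by positivity
  have hQ : ∀ j : Fin n, HasFDerivAt (fun z : (Fin n → ℝ) × (Fin n → ℝ) => z.1 j)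
      ((proj j).comp (fst ℝ (Fin n → ℝ) (Fin n → ℝ))) z :=
    fun j => ((proj j).comp (fst ℝ (Fin n → ℝ) (Fin n → ℝ))).hasFDerivAt
  have hP : ∀ i : Fin n, HasFDerivAt (fun z : (Fin n → ℝ) × (Fin n → ℝ) => z.2 i)
      ((proj i).comp (snd ℝ (Fin n → ℝ) (Fin n → ℝ))) z :=
    fun i => ((proj i).comp (snd ℝ (Fin n → ℝ) (Fin n → ℝ))).hasFDerivAt
  have hN : HasFDerivAt (fun z : (Fin n → ℝ) × (Fin n → ℝ) =>
      (∑ i, z.2 i ^ 2) - c + ∑ j, b j * (z.1 j ^ 2)⁻¹)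
      ((∑ i, (2 * z.2 i ^ 1) • ((proj i).comp (snd ℝ (Fin n → ℝ) (Fin n → ℝ)))) +
        ∑ j, b j • ((-(2 * z.1 j ^ 1) / (z.1 j ^ 2) ^ 2) •
          ((proj j).comp (fst ℝ (Fin n → ℝ) (Fin n → ℝ))))) z := by
    refine HasFDerivAt.add (HasFDerivAt.sub_const c ?_) ?_
    · exact HasFDerivAt.fun_sum fun i _ =>
        by have := (hasDerivAt_pow 2 (z.2 i)).comp_hasFDerivAt z (hP i); exact this
    · refine HasFDerivAt.fun_sum fun j _ => HasFDerivAt.const_mul ?_ (b j)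
      have := ((hasDerivAt_pow 2 (z.1 j)).inv (pow_ne_zero 2 (hz j))).comp_hasFDerivAt z (hQ j)
      exact this
  have hI : HasFDerivAt (fun z : (Fin n → ℝ) × (Fin n → ℝ) =>
      (2 * (κ + ∑ i, z.1 i ^ 2))⁻¹)
      ((-(2:ℝ) / (2 * (κ + ∑ k, z.1 k ^ 2)) ^ 2) •
        (∑ j, (2 * z.1 j ^ 1) • ((proj j).comp (fst ℝ (Fin n → ℝ) (Fin n → ℝ))))) z := by
    have h1 : HasFDerivAt (fun z : (Fin n → ℝ) × (Fin n → ℝ) => ∑ i, z.1 i ^ 2)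
        (∑ j, (2 * z.1 j ^ 1) • ((proj j).comp (fst ℝ (Fin n → ℝ) (Fin n → ℝ)))) z :=
      HasFDerivAt.fun_sum fun j _ => by
        have := (hasDerivAt_pow 2 (z.1 j)).comp_hasFDerivAt z (hQ j); exact this
    have h2 : HasDerivAt (fun x : ℝ => (2 * (κ + x))⁻¹)
        (-(2:ℝ) / (2 * (κ + ∑ k, z.1 k ^ 2)) ^ 2) (∑ k, z.1 k ^ 2) := by
      have := ((((hasDerivAt_id (∑ k, z.1 k ^ 2)).const_add κ).const_mul 2).inv hD)
      refine this.congr_deriv ?_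
      simp
    have := h2.comp_hasFDerivAt z h1
    exact this
  have hdiv := hN.mul hI
  simp only [← div_eq_mul_inv] at hdiv
  refine ⟨_, hdiv, ?_, ?_⟩
  all_goals intro i <;>
    simp [ContinuousLinearMap.sum_apply, Pi.single_apply, Finset.sum_ite_eq', mul_comm] <;>
    field_simp [hz i, hA.ne'] <;> ring

theorem clm_pair_eval {n : ℕ} (L : ((Fin n → ℝ) × (Fin n → ℝ)) →L[ℝ] ℝ)
    (v w : Fin n → ℝ) :
    L (v, w) = (∑ i, v i * L (Pi.single i 1, 0)) + ∑ i, w i * L (0, Pi.single i 1) := by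
  have hsm : ∀ (x : Fin n) (a : ℝ),
      ((Pi.single x a : Fin n → ℝ), (0 : Fin n → ℝ))
        = a • ((Pi.single x 1 : Fin n → ℝ), (0 : Fin n → ℝ)) := by
    intro x a
    rw [Prod.smul_mk, smul_zero]
    refine Prod.ext ?_ rfl
    ext j; simp [Pi.single_apply]
  have hsm' : ∀ (x : Fin n) (a : ℝ),
      ((0 : Fin n → ℝ), (Pi.single x a : Fin n → ℝ))
        = a • ((0 : Fin n → ℝ), (Pi.single x 1 : Fin n → ℝ)) := by
    intro x a
    rw [Prod.smul_mk, smul_zero]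
    refine Prod.ext rfl ?_
    ext j; simp [Pi.single_apply]
  have hv : (v, w) = (∑ i, ((Pi.single i (v i) : Fin n → ℝ), (0 : Fin n → ℝ)))
      + ∑ i, ((0 : Fin n → ℝ), (Pi.single i (w i) : Fin n → ℝ)) := by
    ext j <;>
      simp [Prod.fst_sum, Prod.snd_sum, Finset.sum_apply, Pi.single_apply, Finset.sum_ite_eq']
  rw [hv, map_add, map_sum, map_sum]
  congr 1 <;> refine Finset.sum_congr rfl fun x _ => ?_
  · rw [hsm x (v x), map_smul, smul_eq_mul]
  · rw [hsm' x (w x), map_smul, smul_eq_mul]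

theorem const_of_deriv_zero {f : ℝ → ℝ} {t₀ t₁ : ℝ}
    (hf : ∀ t ∈ Set.Ioo t₀ t₁, HasDerivAt f 0 t) {x y : ℝ}
    (hx : x ∈ Set.Ioo t₀ t₁) (hy : y ∈ Set.Ioo t₀ t₁) : f x = f y := by
  have := Convex.norm_image_sub_le_of_norm_hasDerivWithin_le
    (f := f) (f' := fun _ => (0:ℝ)) (C := 0)
    (fun t ht => (hf t ht).hasDerivWithinAt) (fun t ht => by simp)
    (convex_Ioo t₀ t₁) hy hx
  simpa [sub_eq_zero] using this

/-- Along any solution (q(t), p(t)) of Hamilton's equations for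
H = (|p|² − c + Σⱼ bⱼqⱼ⁻²)/(2(κ + |q|²)) staying in {qᵢ ≠ 0 ∀i}, with
h = H(q(0), p(0)), the quantity
(κ + |q(t)|²)²·q̇ᵢ(t)² − 2h·qᵢ(t)² + bᵢ·qᵢ(t)⁻² is constant in t for each i. -/
theorem first_integral_along_flow (n : ℕ) (hn : 1 ≤ n) (κ c : ℝ) (hκ : 0 < κ)
    (b : Fin n → ℝ)
    (H : (Fin n → ℝ) × (Fin n → ℝ) → ℝ)
    (hH : H = fun z =>
      ((∑ i, z.2 i ^ 2) - c + ∑ j, b j * (z.1 j ^ 2)⁻¹) / (2 * (κ + ∑ i, z.1 i ^ 2)))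
    (t₀ t₁ : ℝ) (ht₀ : t₀ < 0) (ht₁ : 0 < t₁)
    (q p : ℝ → Fin n → ℝ)
    -- the curve stays in the open set where all coordinates qᵢ are nonzero
    (hq0 : ∀ t ∈ Set.Ioo t₀ t₁, ∀ i, q t i ≠ 0)
    -- Hamilton's equations: q̇ᵢ = ∂H/∂pᵢ, ṗᵢ = −∂H/∂qᵢ
    (hamq : ∀ t ∈ Set.Ioo t₀ t₁, ∀ i,
      HasDerivAt (fun s => q s i) (fderiv ℝ H (q t, p t) (0, Pi.single i 1)) t)
    (hamp : ∀ t ∈ Set.Ioo t₀ t₁, ∀ i,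
      HasDerivAt (fun s => p s i) (-fderiv ℝ H (q t, p t) (Pi.single i 1, 0)) t)
    (h : ℝ) (hh : h = H (q 0, p 0)) :
    ∀ i : Fin n, ∀ t ∈ Set.Ioo t₀ t₁,
      (κ + ∑ k, q t k ^ 2) ^ 2 * (deriv (fun s => q s i) t) ^ 2
          - 2 * h * q t i ^ 2 + b i * (q t i ^ 2)⁻¹
        = (κ + ∑ k, q 0 k ^ 2) ^ 2 * (deriv (fun s => q s i) 0) ^ 2
          - 2 * h * q 0 i ^ 2 + b i * (q 0 i ^ 2)⁻¹ := by
  subst hH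
  have h0 : (0:ℝ) ∈ Set.Ioo t₀ t₁ := ⟨ht₀, ht₁⟩
  choose L hL hLp hLq using fun (t : ℝ) (ht : t ∈ Set.Ioo t₀ t₁) =>
    H_fderiv κ c hκ b (q t, p t) (hq0 t ht)
  have hApos : ∀ t, 0 < κ + ∑ k, q t k ^ 2 := fun t => by positivity
  -- derivative of q i
  have hdq : ∀ t, ∀ ht : t ∈ Set.Ioo t₀ t₁, ∀ i,
      HasDerivAt (fun s => q s i) (p t i / (κ + ∑ k, q t k ^ 2)) t := by
    intro t ht i
    have := hamq t ht i
    rwa [(hL t ht).fderiv, hLp t ht i] at this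
  have hdp : ∀ t, ∀ ht : t ∈ Set.Ioo t₀ t₁, ∀ i,
      HasDerivAt (fun s => p s i) (-(L t ht (Pi.single i 1, 0))) t := by
    intro t ht i
    have := hamp t ht i
    rwa [(hL t ht).fderiv] at this
  -- conservation of energy
  have hcons : ∀ t, ∀ ht : t ∈ Set.Ioo t₀ t₁,
      ((∑ i, p t i ^ 2) - c + ∑ j, b j * (q t j ^ 2)⁻¹) / (2 * (κ + ∑ i, q t i ^ 2)) = h := by
    have hE : ∀ t ∈ Set.Ioo t₀ t₁, HasDerivAt (fun u =>
        ((∑ i, p u i ^ 2) - c + ∑ j, b j * (q u j ^ 2)⁻¹) / (2 * (κ + ∑ i, q u i ^ 2))) 0 t := by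
      intro t ht
      have hcurve : HasDerivAt (fun u => (q u, p u))
          ((fun i => p t i / (κ + ∑ k, q t k ^ 2)), fun i => -(L t ht (Pi.single i 1, 0))) t :=
        HasDerivAt.prodMk (hasDerivAt_pi.2 fun i => hdq t ht i)
          (hasDerivAt_pi.2 fun i => hdp t ht i)
      have hcomp := (hL t ht).comp_hasDerivAt t hcurve
      have hval : (L t ht) ((fun i => p t i / (κ + ∑ k, q t k ^ 2)),
          fun i => -(L t ht (Pi.single i 1, 0))) = 0 := by
        rw [clm_pair_eval, ← Finset.sum_add_distrib]
        refine Finset.sum_eq_zero fun i _ => ?_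
        rw [hLp t ht i]
        ring
      rw [hval] at hcomp
      exact hcomp
    intro t ht
    have := const_of_deriv_zero hE ht h0
    rw [this, hh]
  -- numerator identity
  have hNval : ∀ t, ∀ ht : t ∈ Set.Ioo t₀ t₁,
      (∑ i, p t i ^ 2) - c + ∑ j, b j * (q t j ^ 2)⁻¹
        = 2 * h * (κ + ∑ k, q t k ^ 2) := by
    intro t ht
    have h2A : (2:ℝ) * (κ + ∑ i, q t i ^ 2) ≠ 0 := by positivity
    have := hcons t ht
    rw [div_eq_iff h2A] at this
    rw [this]; ring
  intro i
  -- the reduced first integral F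
  have hF : ∀ t ∈ Set.Ioo t₀ t₁, HasDerivAt
      (fun u => p u i ^ 2 - 2 * h * q u i ^ 2 + b i * (q u i ^ 2)⁻¹) 0 t := by
    intro t ht
    have h1 := (hdp t ht i).pow 2
    have h2 := (hdq t ht i).pow 2
    have h3 := ((hdq t ht i).pow 2).inv (pow_ne_zero 2 (hq0 t ht i))
    have hcomb := (h1.sub (HasDerivAt.const_mul (2*h) h2)).add
      (HasDerivAt.const_mul (b i) h3)
    refine hcomb.congr_deriv ?_
    rw [hLq t ht i, hNval t ht]
    have hA := hApos t
    have hq2 : ((fun s => q s i) ^ 2) t = q t i ^ 2 := rfl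
    rw [hq2]
    field_simp [hq0 t ht i, hA.ne']
    ring
  have hFc := fun t (ht : t ∈ Set.Ioo t₀ t₁) => const_of_deriv_zero hF ht h0
  intro t ht
  have e : ∀ u, ∀ hu : u ∈ Set.Ioo t₀ t₁,
      (κ + ∑ k, q u k ^ 2) ^ 2 * (deriv (fun s => q s i) u) ^ 2
          - 2 * h * q u i ^ 2 + b i * (q u i ^ 2)⁻¹
        = p u i ^ 2 - 2 * h * q u i ^ 2 + b i * (q u i ^ 2)⁻¹ := by
    intro u hu
    rw [(hdq u hu i).deriv, div_pow]
    have hA := (hApos u).ne'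
    rw [mul_div_cancel₀ _ (pow_ne_zero 2 hA)]
  rw [e t ht, e 0 h0, hFc t ht]
end

section
/- Let κ > 0 and define v : (0, ∞) → ℝ by v(r) = √(κ + r²)/r. Then for every r > 0, r²·√(κ + r²)·v′(r) = −κ; in particular, the radial Laplace–Beltrami expression (1/(r²(κ + r²)))·d/dr( r²√(κ + r²)·v′(r) ) vanishes identically on (0, ∞), i.e. v is harmonic away from the origin for the metric ds² = (κ + |q|²)d q² on ℝ³. -/
lemma green_aux (κ : ℝ) (hκ : 0 < κ) (r : ℝ) (hr : 0 < r) :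
    r ^ 2 * Real.sqrt (κ + r ^ 2)
      * deriv (fun r => Real.sqrt (κ + r ^ 2) / r) r = -κ := by
  have hs : 0 < κ + r ^ 2 := by positivity
  have hsq : 0 < Real.sqrt (κ + r ^ 2) := Real.sqrt_pos.mpr hs
  have h1 : HasDerivAt (fun r : ℝ => κ + r ^ 2) (2 * r) r := by
    simpa using (hasDerivAt_pow 2 r).const_add κ
  have h2 : HasDerivAt (fun r : ℝ => Real.sqrt (κ + r ^ 2))
      (2 * r / (2 * Real.sqrt (κ + r ^ 2))) r :=
    by simpa [Function.comp_def, mul_comm, div_eq_mul_inv, mul_assoc] using (Real.hasDerivAt_sqrt hs.ne').comp r h1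
  have h3 : HasDerivAt (fun r : ℝ => Real.sqrt (κ + r ^ 2) / r)
      ((2 * r / (2 * Real.sqrt (κ + r ^ 2)) * r - Real.sqrt (κ + r ^ 2) * 1) / r ^ 2) r :=
    h2.div (hasDerivAt_id r) hr.ne'
  rw [h3.deriv]
  have hsqsq : Real.sqrt (κ + r ^ 2) * Real.sqrt (κ + r ^ 2) = κ + r ^ 2 :=
    Real.mul_self_sqrt hs.le
  set t := Real.sqrt (κ + r ^ 2) with ht
  field_simp
  linear_combination (-1) * hsqsq

/-- The function v(r) = √(κ + r²)/r satisfies r²√(κ + r²)·v′(r) = −κ on (0, ∞);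
hence the radial Laplace–Beltrami expression
(1/(r²(κ + r²)))·d/dr(r²√(κ + r²)·v′(r)) vanishes on (0, ∞), i.e. v is harmonic
away from the origin for the metric ds² = (κ + |q|²)dq² on ℝ³. -/
theorem green_function_harmonic (κ : ℝ) (hκ : 0 < κ)
    (v : ℝ → ℝ) (hv : v = fun r => Real.sqrt (κ + r ^ 2) / r) :
    (∀ r : ℝ, 0 < r → r ^ 2 * Real.sqrt (κ + r ^ 2) * deriv v r = -κ) ∧
    (∀ r : ℝ, 0 < r →
      (1 / (r ^ 2 * (κ + r ^ 2)))
        * deriv (fun s => s ^ 2 * Real.sqrt (κ + s ^ 2) * deriv v s) r = 0) := by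
  subst hv
  refine ⟨fun r hr => green_aux κ hκ r hr, fun r hr => ?_⟩
  have heq : (fun s => s ^ 2 * Real.sqrt (κ + s ^ 2)
      * deriv (fun r => Real.sqrt (κ + r ^ 2) / r) s) =ᶠ[nhds r] (fun _ => -κ) := by
    filter_upwards [eventually_gt_nhds hr] with s hs
    exact green_aux κ hκ s hs
  rw [heq.deriv_eq, deriv_const]
  ring
end

section
/- Let n ≥ 1, κ > 0, c ∈ ℝ and b₁,…,bₙ ≥ 0. Define H(q,p) = (|p|² − c + Σⱼ bⱼ qⱼ⁻²)/(2(κ + |q|²)) and Iᵢ(q,p) = pᵢ² − 2H(q,p)·qᵢ² + bᵢqᵢ⁻² for 1 ≤ i ≤ n. Then the functions I₁, …, Iₙ are functionally independent: there exists a point (q,p) with all qᵢ ≠ 0 at which the differentials dI₁, …, dIₙ (equivalently, the gradients of I₁, …, Iₙ as vectors in ℝ²ⁿ) are linearly independent. -/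
/-- The integrals Iᵢ = pᵢ² − 2H qᵢ² + bᵢqᵢ⁻² (with bᵢ ≥ 0 and
H = (|p|² − c + Σⱼ bⱼqⱼ⁻²)/(2(κ + |q|²))) are functionally independent: their
differentials are linearly independent at some point with all qᵢ ≠ 0. -/
theorem integrals_functionally_independent (n : ℕ) (hn : 1 ≤ n) (κ c : ℝ)
    (hκ : 0 < κ) (b : Fin n → ℝ) (hb : ∀ i, 0 ≤ b i)
    (H : (Fin n → ℝ) × (Fin n → ℝ) → ℝ)
    (I : Fin n → (Fin n → ℝ) × (Fin n → ℝ) → ℝ)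
    (hH : H = fun z =>
      ((∑ i, z.2 i ^ 2) - c + ∑ j, b j * (z.1 j ^ 2)⁻¹) / (2 * (κ + ∑ i, z.1 i ^ 2)))
    (hI : I = fun i z => z.2 i ^ 2 - 2 * H z * z.1 i ^ 2 + b i * (z.1 i ^ 2)⁻¹) :
    ∃ z : (Fin n → ℝ) × (Fin n → ℝ), (∀ i, z.1 i ≠ 0) ∧
      LinearIndependent ℝ (fun i : Fin n => fderiv ℝ (I i) z) := by
  subst hH hI
  have hκn : (0:ℝ) < κ + n := by positivity
  set pt : (Fin n → ℝ) × (Fin n → ℝ) := (fun _ => 1, fun _ => 1) with hpt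
  set w : Fin n → (Fin n → ℝ) × (Fin n → ℝ) :=
    fun j => ((0 : Fin n → ℝ), (Pi.single j 1 : Fin n → ℝ)) with hw
  set F : Fin n → (Fin n → ℝ) × (Fin n → ℝ) → ℝ := fun i z =>
    z.2 i ^ 2 - 2 * (((∑ i, z.2 i ^ 2) - c + ∑ j, b j * (z.1 j ^ 2)⁻¹) /
      (2 * (κ + ∑ i, z.1 i ^ 2))) * z.1 i ^ 2 + b i * (z.1 i ^ 2)⁻¹ with hF
  -- differentiability
  have h1 : ∀ k : Fin n, DifferentiableAt ℝ (fun v : (Fin n → ℝ) × (Fin n → ℝ) => v.1 k) pt := by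
    fun_prop
  have h2 : ∀ k : Fin n, DifferentiableAt ℝ (fun v : (Fin n → ℝ) × (Fin n → ℝ) => v.2 k) pt := by
    fun_prop
  have hdiv : DifferentiableAt ℝ (fun z : (Fin n → ℝ) × (Fin n → ℝ) =>
      ((∑ i, z.2 i ^ 2) - c + ∑ j, b j * (z.1 j ^ 2)⁻¹) * (2 * (κ + ∑ i, z.1 i ^ 2))⁻¹) pt := by
    have hnum : DifferentiableAt ℝ (fun z : (Fin n → ℝ) × (Fin n → ℝ) =>
        (∑ i, z.2 i ^ 2) - c + ∑ j, b j * (z.1 j ^ 2)⁻¹) pt :=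
      ((DifferentiableAt.fun_sum fun k _ => (h2 k).pow 2).sub (differentiableAt_const c)).add
        (DifferentiableAt.fun_sum fun k _ =>
          ((differentiableAt_const (b k)).mul (((h1 k).pow 2).inv (by norm_num))))
    have hden : DifferentiableAt ℝ (fun z : (Fin n → ℝ) × (Fin n → ℝ) =>
        2 * (κ + ∑ i, z.1 i ^ 2)) pt :=
      (differentiableAt_const 2).mul
        ((differentiableAt_const κ).add (DifferentiableAt.fun_sum fun k _ => (h1 k).pow 2))
    refine hnum.mul (hden.inv ?_)
    simp only [hpt, one_pow, Finset.sum_const, Finset.card_univ, Fintype.card_fin, nsmul_eq_mul,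
      mul_one]
    positivity
  have hdiff : ∀ i, DifferentiableAt ℝ (F i) pt := by
    intro i
    simp only [hF, div_eq_mul_inv]
    exact (((h2 i).pow 2).sub (((differentiableAt_const 2).mul hdiv).mul
      ((h1 i).pow 2))).add ((differentiableAt_const (b i)).mul (((h1 i).pow 2).inv (by norm_num)))
  -- key: value of the differential on the directions w j
  have key : ∀ i j, fderiv ℝ (F i) pt (w j) =
      2 * (if i = j then (1:ℝ) else 0) - 2/(κ+(n:ℝ)) := by
    intro i j
    set δ : ℝ := if i = j then 1 else 0 with hδ
    have hline : HasDerivAt (fun t : ℝ => pt + t • w j) (w j) 0 := by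
      simpa using ((hasDerivAt_id (0:ℝ)).smul_const (w j)).const_add pt
    have hcomp : HasDerivAt (fun t : ℝ => F i (pt + t • w j)) (fderiv ℝ (F i) pt (w j)) 0 := by
      have h0 : pt + (0:ℝ) • w j = pt := by simp
      have hf' : HasFDerivAt (F i) (fderiv ℝ (F i) pt) (pt + (0:ℝ) • w j) := by
        rw [h0]; exact (hdiff i).hasFDerivAt
      exact hf'.comp_hasDerivAt 0 hline
    -- explicit form
    have hsum : ∀ t : ℝ, ∑ k, (1 + t * (Pi.single j (1:ℝ) : Fin n → ℝ) k)^2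
        = (n:ℝ) + 2*t + t^2 := by
      intro t
      have he : ∀ k : Fin n, (1 + t * (Pi.single j (1:ℝ) : Fin n → ℝ) k)^2
          = 1 + (if k = j then 2*t + t^2 else 0) := by
        intro k; rw [Pi.single_apply]; split_ifs <;> ring
      rw [Finset.sum_congr rfl (fun k _ => he k), Finset.sum_add_distrib]
      simp [Finset.sum_ite_eq', Finset.sum_const, Finset.card_univ]
      ring
    have hfun : (fun t : ℝ => F i (pt + t • w j)) =
        (fun t : ℝ => (1 + t*δ)^2
          - 2*(((n:ℝ) + 2*t + t^2 - c + (∑ k, b k)) * (2*(κ+(n:ℝ)))⁻¹) + b i) := by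
      funext t
      simp only [hF, hpt, hw, Prod.fst_add, Prod.snd_add, Prod.smul_fst, Prod.smul_snd,
        Pi.add_apply, Pi.smul_apply, smul_eq_mul, Pi.zero_apply, mul_zero, add_zero,
        one_pow, inv_one, mul_one, Finset.sum_const, Finset.card_univ, Fintype.card_fin,
        nsmul_eq_mul, div_eq_mul_inv]
      rw [hsum t, Pi.single_apply]
    have hexp : HasDerivAt (fun t : ℝ => F i (pt + t • w j)) (2*δ - 2/(κ+(n:ℝ))) 0 := by
      rw [hfun]
      have h1' : HasDerivAt (fun t : ℝ => 1 + t*δ) δ 0 := by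
        simpa using ((hasDerivAt_id (0:ℝ)).mul_const δ).const_add 1
      have h1p : HasDerivAt (fun t : ℝ => (1 + t*δ)^2) (2*δ) 0 := by
        simpa using h1'.fun_pow 2
      have hb2 : HasDerivAt (fun t : ℝ => (n:ℝ) + 2*t + t^2 - c + (∑ k, b k)) 2 0 := by
        have ha : HasDerivAt (fun t : ℝ => (n:ℝ) + 2*t) 2 0 := by
          simpa using ((hasDerivAt_id (0:ℝ)).const_mul 2).const_add (n:ℝ)
        have hbp : HasDerivAt (fun t : ℝ => t^2) (0:ℝ) 0 := by
          simpa using hasDerivAt_pow 2 (0:ℝ)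
        simpa using ((ha.add hbp).sub_const c).add_const (∑ k, b k)
      have h3 : HasDerivAt
          (fun t : ℝ => 2*(((n:ℝ) + 2*t + t^2 - c + (∑ k, b k)) * (2*(κ+(n:ℝ)))⁻¹))
          (2*(2 * (2*(κ+(n:ℝ)))⁻¹)) 0 := (hb2.mul_const _).const_mul 2
      have := (h1p.fun_sub h3).add_const (b i)
      refine this.congr_deriv ?_
      field_simp
    have := hcomp.unique hexp
    rw [this, hδ]
  -- linear independence
  refine ⟨pt, fun i => one_ne_zero, ?_⟩
  rw [Fintype.linearIndependent_iff]
  intro g hg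
  have hj : ∀ j, 2 * g j - (2/(κ+(n:ℝ))) * (∑ i, g i) = 0 := by
    intro j
    have h0 := congrArg (fun L : ((Fin n → ℝ) × (Fin n → ℝ)) →L[ℝ] ℝ => L (w j)) hg
    simp only [ContinuousLinearMap.coe_sum', Finset.sum_apply, ContinuousLinearMap.coe_smul',
      Pi.smul_apply, smul_eq_mul, ContinuousLinearMap.zero_apply, key] at h0
    have he : ∀ x : Fin n, g x * (2 * (if x = j then (1:ℝ) else 0) - 2/(κ+(n:ℝ)))
        = (if x = j then 2 * g x else 0) - 2/(κ+(n:ℝ)) * g x := by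
      intro x; split_ifs <;> ring
    rw [Finset.sum_congr rfl (fun x _ => he x), Finset.sum_sub_distrib,
      Finset.sum_ite_eq' Finset.univ j (fun x => 2 * g x), ← Finset.mul_sum] at h0
    simpa using h0
  set S : ℝ := ∑ i, g i with hS
  have hg' : ∀ j, g j = S / (κ+(n:ℝ)) := by
    intro j
    have h := hj j
    field_simp at h ⊢
    linarith
  have hSn : S * (κ+(n:ℝ)) = (n:ℝ) * S := by
    have : S = ∑ i : Fin n, S / (κ+(n:ℝ)) := by
      conv_lhs => rw [hS]
      exact Finset.sum_congr rfl fun i _ => hg' i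
    rw [Finset.sum_const, Finset.card_univ, Fintype.card_fin, nsmul_eq_mul] at this
    field_simp at this
    linarith
  have hS0 : S = 0 := by
    have hk : S * κ = 0 := by linarith [hSn]
    rcases mul_eq_zero.mp hk with h | h
    · exact h
    · exact absurd h (ne_of_gt hκ)
  intro i
  rw [hg' i, hS0, zero_div]
end
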